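/- arXiv:2208.06477 — 8 statements merged into one kernel-verified Lean document; each statement's English description precedes it below -/
import Mathlib

section
/- Consider a solution of the internal wave problem such that the velocity fields 𝐮₁ and 𝐮₂ are bounded on their layers and the vorticities ω₁ = ∇×𝐮₁ and ω₂ = ∇×𝐮₂ are constant nonzero vectors, say ωᵢ = (αᵢ, βᵢ, γᵢ). Then the third (vertical) components of both vorticity vectors vanish: γ₁ = 0 and γ₂ = 0. -/
noncomputable section

open Set

/-- Partial derivative in the `x`-direction of a function on `ℝ × ℝ × ℝ`. -/
def pdx (f : ℝ × ℝ × ℝ → ℝ) (p : ℝ × ℝ × ℝ) : ℝ := fderiv ℝ f p (1, 0, 0)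

/-- Partial derivative in the `y`-direction of a function on `ℝ × ℝ × ℝ`. -/
def pdy (f : ℝ × ℝ × ℝ → ℝ) (p : ℝ × ℝ × ℝ) : ℝ := fderiv ℝ f p (0, 1, 0)

/-- Partial derivative in the `z`-direction of a function on `ℝ × ℝ × ℝ`. -/
def pdz (f : ℝ × ℝ × ℝ → ℝ) (p : ℝ × ℝ × ℝ) : ℝ := fderiv ℝ f p (0, 0, 1)

/-- The curl `∇ × (u,v,w)` of a vector field on `ℝ³`. -/
def curl3 (u v w : ℝ × ℝ × ℝ → ℝ) (p : ℝ × ℝ × ℝ) : ℝ × ℝ × ℝ :=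
  (pdy w p - pdz v p, pdz u p - pdx w p, pdx v p - pdy u p)

/-- The lower fluid layer `Ω₁ = {(x,y,z) : -h₁ < z < η(x,y)}`. -/
def layer1 (h₁ : ℝ) (η : ℝ × ℝ → ℝ) : Set (ℝ × ℝ × ℝ) :=
  {p | -h₁ < p.2.2 ∧ p.2.2 < η (p.1, p.2.1)}

/-- The upper fluid layer `Ω₂ = {(x,y,z) : η(x,y) < z < h₂}`. -/
def layer2 (h₂ : ℝ) (η : ℝ × ℝ → ℝ) : Set (ℝ × ℝ × ℝ) :=
  {p | η (p.1, p.2.1) < p.2.2 ∧ p.2.2 < h₂}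

/-- A (classical) solution of the steady internal gravity wave problem for two
superposed constant-density fluids in a channel `-h₁ < z < h₂`, with interface
`z = η(x,y)`, velocities `𝐮ᵢ = (uᵢ, vᵢ, wᵢ)` and pressures `Pᵢ`. -/
structure InternalWaveSolution (h₁ h₂ g ρ₁ ρ₂ : ℝ) (η : ℝ × ℝ → ℝ)
    (u₁ v₁ w₁ P₁ u₂ v₂ w₂ P₂ : ℝ × ℝ × ℝ → ℝ) : Prop where
  h₁_pos : 0 < h₁
  h₂_pos : 0 < h₂
  g_pos : 0 < g
  ρ₁_pos : 0 < ρ₁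
  ρ₂_pos : 0 < ρ₂
  η_C1 : ContDiff ℝ 1 η
  η_inf : ∃ a : ℝ, -h₁ < a ∧ ∀ q : ℝ × ℝ, a ≤ η q
  η_sup : ∃ b : ℝ, b < h₂ ∧ ∀ q : ℝ × ℝ, η q ≤ b
  u₁_cont : ContinuousOn u₁ (closure (layer1 h₁ η))
  v₁_cont : ContinuousOn v₁ (closure (layer1 h₁ η))
  w₁_cont : ContinuousOn w₁ (closure (layer1 h₁ η))
  P₁_cont : ContinuousOn P₁ (closure (layer1 h₁ η))
  u₁_C2 : ContDiffOn ℝ 2 u₁ (layer1 h₁ η)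
  v₁_C2 : ContDiffOn ℝ 2 v₁ (layer1 h₁ η)
  w₁_C2 : ContDiffOn ℝ 2 w₁ (layer1 h₁ η)
  P₁_C2 : ContDiffOn ℝ 2 P₁ (layer1 h₁ η)
  u₂_cont : ContinuousOn u₂ (closure (layer2 h₂ η))
  v₂_cont : ContinuousOn v₂ (closure (layer2 h₂ η))
  w₂_cont : ContinuousOn w₂ (closure (layer2 h₂ η))
  P₂_cont : ContinuousOn P₂ (closure (layer2 h₂ η))
  u₂_C2 : ContDiffOn ℝ 2 u₂ (layer2 h₂ η)
  v₂_C2 : ContDiffOn ℝ 2 v₂ (layer2 h₂ η)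
  w₂_C2 : ContDiffOn ℝ 2 w₂ (layer2 h₂ η)
  P₂_C2 : ContDiffOn ℝ 2 P₂ (layer2 h₂ η)
  momentum₁_x : ∀ p ∈ layer1 h₁ η,
    ρ₁ * (u₁ p * pdx u₁ p + v₁ p * pdy u₁ p + w₁ p * pdz u₁ p) = -(pdx P₁ p)
  momentum₁_y : ∀ p ∈ layer1 h₁ η,
    ρ₁ * (u₁ p * pdx v₁ p + v₁ p * pdy v₁ p + w₁ p * pdz v₁ p) = -(pdy P₁ p)
  momentum₁_z : ∀ p ∈ layer1 h₁ η,
    ρ₁ * (u₁ p * pdx w₁ p + v₁ p * pdy w₁ p + w₁ p * pdz w₁ p) = -(pdz P₁ p) - ρ₁ * g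
  momentum₂_x : ∀ p ∈ layer2 h₂ η,
    ρ₂ * (u₂ p * pdx u₂ p + v₂ p * pdy u₂ p + w₂ p * pdz u₂ p) = -(pdx P₂ p)
  momentum₂_y : ∀ p ∈ layer2 h₂ η,
    ρ₂ * (u₂ p * pdx v₂ p + v₂ p * pdy v₂ p + w₂ p * pdz v₂ p) = -(pdy P₂ p)
  momentum₂_z : ∀ p ∈ layer2 h₂ η,
    ρ₂ * (u₂ p * pdx w₂ p + v₂ p * pdy w₂ p + w₂ p * pdz w₂ p) = -(pdz P₂ p) - ρ₂ * g
  incompressible₁ : ∀ p ∈ layer1 h₁ η, pdx u₁ p + pdy v₁ p + pdz w₁ p = 0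
  incompressible₂ : ∀ p ∈ layer2 h₂ η, pdx u₂ p + pdy v₂ p + pdz w₂ p = 0
  kinematic₁ : ∀ x y : ℝ,
    u₁ (x, y, η (x, y)) * fderiv ℝ η (x, y) (1, 0)
      + v₁ (x, y, η (x, y)) * fderiv ℝ η (x, y) (0, 1) = w₁ (x, y, η (x, y))
  kinematic₂ : ∀ x y : ℝ,
    u₂ (x, y, η (x, y)) * fderiv ℝ η (x, y) (1, 0)
      + v₂ (x, y, η (x, y)) * fderiv ℝ η (x, y) (0, 1) = w₂ (x, y, η (x, y))
  dynamic : ∀ x y : ℝ, P₁ (x, y, η (x, y)) = P₂ (x, y, η (x, y))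
  bed : ∀ x y : ℝ, w₁ (x, y, -h₁) = 0
  lid : ∀ x y : ℝ, w₂ (x, y, h₂) = 0

/-- The velocity field `(u,v,w)` is (uniformly) bounded on the set `s`. -/
def BoundedVel (s : Set (ℝ × ℝ × ℝ)) (u v w : ℝ × ℝ × ℝ → ℝ) : Prop :=
  ∃ C : ℝ, ∀ p ∈ s, |u p| ≤ C ∧ |v p| ≤ C ∧ |w p| ≤ C

/-
The vertical vorticity only involves the horizontal velocity, so it suffices to look at a
horizontal plane `z = c` lying inside the layer, which exists because the interface stays away
from the walls. On that plane `(u, v)` is a bounded planar field with constant curl `γ`, and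
Green's theorem on the square `[0, R]²` gives `γ R² = ∮ u dx + v dy`, a boundary integral of size
at most `4 C R`. Letting `R → ∞` forces `γ = 0`.
-/

open MeasureTheory intervalIntegral Topology

lemma eq_zero_of_forall_abs_mul_sq_le {γ K : ℝ} (h : ∀ R > 0, |γ| * R ^ 2 ≤ K * R) : γ = 0 := by
  by_contra hγ
  have hγpos : 0 < |γ| := abs_pos.mpr hγ
  set R := (|K| + 1) / |γ|
  have hR : 0 < R := by positivity
  have hγR : |γ| * R = |K| + 1 := mul_div_cancel₀ _ hγpos.ne'
  have : |γ| * R * R ≤ K * R := by rw [mul_assoc, ← sq]; exact h R hR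
  have : |K| + 1 ≤ K := by rw [hγR] at this; exact le_of_mul_le_mul_right this hR
  linarith [le_abs_self K]

theorem curl_eq_zero_of_bounded_of_curl_eq_const {f g : ℝ × ℝ → ℝ} {C γ : ℝ}
    (hf : Differentiable ℝ f) (hg : Differentiable ℝ g)
    (hfC : ∀ p, |f p| ≤ C) (hgC : ∀ p, |g p| ≤ C)
    (hγ : ∀ p, fderiv ℝ g p (1, 0) - fderiv ℝ f p (0, 1) = γ) : γ = 0 := by
  refine eq_zero_of_forall_abs_mul_sq_le (K := 4 * C) fun R hR => ?_
  have hbound : ∀ φ : ℝ → ℝ, (∀ t, |φ t| ≤ C) → |∫ t in (0 : ℝ)..R, φ t| ≤ C * R := by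
    intro φ hφ
    simpa [abs_of_pos hR] using norm_integral_le_of_norm_le_const (a := 0) (b := R)
      fun t _ => (Real.norm_eq_abs _).trans_le (hφ t)
  have green : γ * R ^ 2 = (((∫ x in (0 : ℝ)..R, -f (x, R)) - ∫ x in (0 : ℝ)..R, -f (x, 0))
      + ∫ y in (0 : ℝ)..R, g (R, y)) - ∫ y in (0 : ℝ)..R, g (0, y) := by
    have hdiv : ∀ p, fderiv ℝ g p (1, 0) + (-fderiv ℝ f p) (0, 1) = γ := fun p => by
      rw [← hγ p]; simp [sub_eq_add_neg]
    -- the divergence of `(g, -f)` is the curl of `(f, g)`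
    have hstokes :=
      integral2_divergence_prod_of_hasFDerivAt g (-f) (fderiv ℝ g) (-fderiv ℝ f) 0 0 R R
      hg.continuous.continuousOn hf.continuous.neg.continuousOn
      (fun p _ => (hg p).hasFDerivAt) (fun p _ => (hf p).hasFDerivAt.neg)
      (by
        simp only [Pi.neg_apply, hdiv]
        exact integrableOn_const (isCompact_uIcc.prod isCompact_uIcc).measure_lt_top.ne)
    simp only [Pi.neg_apply, hdiv, intervalIntegral.integral_const, smul_eq_mul, sub_zero]
      at hstokes
    rw [← hstokes]
    ring
  have hf' : ∀ c, ∀ t, |-f (t, c)| ≤ C := fun c t => (abs_neg _).trans_le (hfC _)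
  calc |γ| * R ^ 2 = |γ * R ^ 2| := by rw [abs_mul, abs_of_nonneg (sq_nonneg R)]
    _ ≤ C * R + C * R + C * R + C * R := by
      rw [green]
      refine (abs_sub _ _).trans (add_le_add ((abs_add_le _ _).trans
        (add_le_add ((abs_sub _ _).trans (add_le_add ?_ ?_)) ?_)) ?_)
      · exact hbound _ (hf' R)
      · exact hbound _ (hf' 0)
      · exact hbound _ fun t => hgC _
      · exact hbound _ fun t => hgC _
    _ = 4 * C * R := by ring

lemma fderiv_comp_horizontal_apply {u : ℝ × ℝ × ℝ → ℝ} {c : ℝ} {q : ℝ × ℝ}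
    (hu : DifferentiableAt ℝ u (q.1, q.2, c)) (a b : ℝ) :
    fderiv ℝ (fun q : ℝ × ℝ => u (q.1, q.2, c)) q (a, b) = fderiv ℝ u (q.1, q.2, c) (a, b, 0) := by
  have hι : HasFDerivAt (fun q : ℝ × ℝ => (q.1, q.2, c))
      ((ContinuousLinearMap.fst ℝ ℝ ℝ).prod ((ContinuousLinearMap.snd ℝ ℝ ℝ).prod 0)) q :=
    hasFDerivAt_fst.prodMk (hasFDerivAt_snd.prodMk (hasFDerivAt_const c q))
  rw [HasFDerivAt.fderiv (f := fun q : ℝ × ℝ => u (q.1, q.2, c)) (hu.hasFDerivAt.comp q hι)]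
  simp

theorem vertical_curl_eq_zero_of_bounded_on_plane {u v : ℝ × ℝ × ℝ → ℝ} {c C γ : ℝ}
    (hu : ∀ x y, DifferentiableAt ℝ u (x, y, c)) (hv : ∀ x y, DifferentiableAt ℝ v (x, y, c))
    (huC : ∀ x y, |u (x, y, c)| ≤ C) (hvC : ∀ x y, |v (x, y, c)| ≤ C)
    (hγ : ∀ x y, pdx v (x, y, c) - pdy u (x, y, c) = γ) : γ = 0 := by
  have hdiff : ∀ w : ℝ × ℝ × ℝ → ℝ, (∀ x y, DifferentiableAt ℝ w (x, y, c)) →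
      Differentiable ℝ fun q : ℝ × ℝ => w (q.1, q.2, c) :=
    fun w hw q => (hw q.1 q.2).comp q (by fun_prop)
  refine curl_eq_zero_of_bounded_of_curl_eq_const (hdiff u hu) (hdiff v hv)
    (fun q => huC q.1 q.2) (fun q => hvC q.1 q.2) fun q => ?_
  rw [fderiv_comp_horizontal_apply (hv q.1 q.2), fderiv_comp_horizontal_apply (hu q.1 q.2)]
  exact hγ q.1 q.2

theorem vertical_vorticity_eq_zero_of_plane_subset {U : Set (ℝ × ℝ × ℝ)} (hU : IsOpen U) {c : ℝ}
    (hc : ∀ x y, (x, y, c) ∈ U) {u v w : ℝ × ℝ × ℝ → ℝ}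
    (hu : DifferentiableOn ℝ u U) (hv : DifferentiableOn ℝ v U) (hb : BoundedVel U u v w)
    {α β γ : ℝ} (hω : ∀ p ∈ U, curl3 u v w p = (α, β, γ)) : γ = 0 := by
  obtain ⟨C, hC⟩ := hb
  have hnhds : ∀ x y, U ∈ 𝓝 (x, y, c) := fun x y => hU.mem_nhds (hc x y)
  exact vertical_curl_eq_zero_of_bounded_on_plane
    (fun x y => hu.differentiableAt (hnhds x y)) (fun x y => hv.differentiableAt (hnhds x y))
    (fun x y => (hC _ (hc x y)).1) (fun x y => (hC _ (hc x y)).2.1)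
    fun x y => congrArg (fun ω : ℝ × ℝ × ℝ => ω.2.2) (hω _ (hc x y))

lemma isOpen_layer1 {η : ℝ × ℝ → ℝ} (hη : Continuous η) (h₁ : ℝ) : IsOpen (layer1 h₁ η) := by
  unfold layer1
  simp only [ofPred_and]
  exact (isOpen_lt continuous_const (by fun_prop)).inter (isOpen_lt (by fun_prop) (by fun_prop))

lemma isOpen_layer2 {η : ℝ × ℝ → ℝ} (hη : Continuous η) (h₂ : ℝ) : IsOpen (layer2 h₂ η) := by
  unfold layer2
  simp only [ofPred_and]
  exact (isOpen_lt (by fun_prop) (by fun_prop)).inter (isOpen_lt (by fun_prop) continuous_const)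

lemma exists_plane_subset_layer1 {h₁ a : ℝ} {η : ℝ × ℝ → ℝ} (ha : -h₁ < a)
    (hη : ∀ q, a ≤ η q) : ∃ c, ∀ x y, (x, y, c) ∈ layer1 h₁ η :=
  let ⟨c, hc₁, hca⟩ := exists_between ha
  ⟨c, fun x y => ⟨hc₁, hca.trans_le (hη (x, y))⟩⟩

lemma exists_plane_subset_layer2 {h₂ b : ℝ} {η : ℝ × ℝ → ℝ} (hb : b < h₂)
    (hη : ∀ q, η q ≤ b) : ∃ c, ∀ x y, (x, y, c) ∈ layer2 h₂ η :=
  let ⟨c, hbc, hc₂⟩ := exists_between hb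
  ⟨c, fun x y => ⟨(hη (x, y)).trans_lt hbc, hc₂⟩⟩

theorem vertical_vorticity_vanishes_general
    (h₁ h₂ g ρ₁ ρ₂ : ℝ) (η : ℝ × ℝ → ℝ)
    (u₁ v₁ w₁ P₁ u₂ v₂ w₂ P₂ : ℝ × ℝ × ℝ → ℝ)
    (sol : InternalWaveSolution h₁ h₂ g ρ₁ ρ₂ η u₁ v₁ w₁ P₁ u₂ v₂ w₂ P₂)
    (hb₁ : BoundedVel (layer1 h₁ η) u₁ v₁ w₁)
    (hb₂ : BoundedVel (layer2 h₂ η) u₂ v₂ w₂)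
    (α₁ β₁ γ₁ α₂ β₂ γ₂ : ℝ)
    (hω₁ : ∀ p ∈ layer1 h₁ η, curl3 u₁ v₁ w₁ p = (α₁, β₁, γ₁))
    (hω₂ : ∀ p ∈ layer2 h₂ η, curl3 u₂ v₂ w₂ p = (α₂, β₂, γ₂)) :
    γ₁ = 0 ∧ γ₂ = 0 := by
  have hη : Continuous η := sol.η_C1.continuous
  obtain ⟨a, ha, hηa⟩ := sol.η_inf
  obtain ⟨b, hb, hηb⟩ := sol.η_sup
  obtain ⟨c₁, hc₁⟩ := exists_plane_subset_layer1 ha hηa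
  obtain ⟨c₂, hc₂⟩ := exists_plane_subset_layer2 hb hηb
  exact ⟨vertical_vorticity_eq_zero_of_plane_subset (isOpen_layer1 hη h₁) hc₁
      (sol.u₁_C2.differentiableOn two_ne_zero) (sol.v₁_C2.differentiableOn two_ne_zero) hb₁ hω₁,
    vertical_vorticity_eq_zero_of_plane_subset (isOpen_layer2 hη h₂) hc₂
      (sol.u₂_C2.differentiableOn two_ne_zero) (sol.v₂_C2.differentiableOn two_ne_zero) hb₂ hω₂⟩

/-- **Theorem 1 (dimension reduction for the vorticity).** For a bounded-velocity
solution of the internal wave problem whose vorticities `ωᵢ = ∇ × 𝐮ᵢ = (αᵢ, βᵢ, γᵢ)`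
are constant and nonzero, the vertical components `γ₁`, `γ₂` both vanish. -/
theorem vertical_vorticity_vanishes
    (h₁ h₂ g ρ₁ ρ₂ : ℝ) (η : ℝ × ℝ → ℝ)
    (u₁ v₁ w₁ P₁ u₂ v₂ w₂ P₂ : ℝ × ℝ × ℝ → ℝ)
    (sol : InternalWaveSolution h₁ h₂ g ρ₁ ρ₂ η u₁ v₁ w₁ P₁ u₂ v₂ w₂ P₂)
    (hb₁ : BoundedVel (layer1 h₁ η) u₁ v₁ w₁)
    (hb₂ : BoundedVel (layer2 h₂ η) u₂ v₂ w₂)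
    (α₁ β₁ γ₁ α₂ β₂ γ₂ : ℝ)
    (hω₁ : ∀ p ∈ layer1 h₁ η, curl3 u₁ v₁ w₁ p = (α₁, β₁, γ₁))
    (hω₂ : ∀ p ∈ layer2 h₂ η, curl3 u₂ v₂ w₂ p = (α₂, β₂, γ₂))
    (hω₁ne : (α₁, β₁, γ₁) ≠ ((0 : ℝ), (0 : ℝ), (0 : ℝ)))
    (hω₂ne : (α₂, β₂, γ₂) ≠ ((0 : ℝ), (0 : ℝ), (0 : ℝ))) :
    γ₁ = 0 ∧ γ₂ = 0 :=
  vertical_vorticity_vanishes_general h₁ h₂ g ρ₁ ρ₂ η u₁ v₁ w₁ P₁ u₂ v₂ w₂ P₂ sol hb₁ hb₂ α₁ β₁ γ₁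
    α₂ β₂ γ₂ hω₁ hω₂
end
end

section
/- Let Ω ⊆ ℝ³ be open, ρ > 0, g ∈ ℝ, and let 𝐮 : Ω → ℝ³ and P : Ω → ℝ be twice continuously differentiable and satisfy ρ(𝐮·∇)𝐮 = −∇P + ρ(0,0,−g) and ∇·𝐮 = 0 in Ω. If moreover the vorticity is constant, ∇×𝐮 ≡ ω for a fixed vector ω ∈ ℝ³, then (ω·∇)𝐮 = 0 in Ω; i.e., the velocity field 𝐮 is constant along every direction parallel to ω. -/
/-!
Taking the curl of the momentum equation removes the pressure and the gravity term. Since the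
vorticity is constant, the second-order terms of the curl of `(𝐮·∇)𝐮` cancel, and what remains
says that `A²` is symmetric, where `A = ∇𝐮` is the velocity gradient. Write `A = S + W` with
`S` symmetric and `W x = ω × x / 2`. Then `SW + WS` is the antisymmetric matrix
`x ↦ ((tr S) ω - S ω) × x / 2`, so `A²` symmetric and `tr A = ∇·𝐮 = 0` give `S ω = 0`, hence
`(ω·∇)𝐮 = A ω = S ω = 0`.
-/

noncomputable section

open Filter Topology
open scoped Matrix

section Calculus

variable {E V : Type*} [NormedAddCommGroup E] [NormedSpace ℝ E] [NormedAddCommGroup V]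
  [NormedSpace ℝ V] {p : E}

theorem fderiv_eq_zero_of_eventually_eq_const {f : E → V} {c : V} (hf : ∀ᶠ q in 𝓝 p, f q = c) :
    fderiv ℝ f p = 0 := by
  rw [Filter.EventuallyEq.fderiv_eq (f := fun _ => c) hf, fderiv_const_apply]

theorem fderiv_fderiv_apply {F : E → V} (hF : DifferentiableAt ℝ (fderiv ℝ F) p) (v w : E) :
    fderiv ℝ (fun q => fderiv ℝ F q v) p w = fderiv ℝ (fderiv ℝ F) p w v := by
  rw [fderiv_clm_apply hF (differentiableAt_const v)]
  simp

end Calculus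

section ConvectiveDeriv

variable {E : Type*} [NormedAddCommGroup E] [NormedSpace ℝ E] {ι : Type*} [Fintype ι]

/-- The convective derivative `(𝐮·∇)F` along the vector field `𝐮 = ∑ i, u i • e i`. -/
def convectiveDeriv (e : ι → E) (u : ι → E → ℝ) (F : E → ℝ) (q : E) : ℝ :=
  ∑ i, u i q * fderiv ℝ F q (e i)

/-- Entry `(i, j)` is `∂ⱼ uᵢ`, the derivative of `u i` along `e j`. -/
def velocityGradient (e : ι → E) (u : ι → E → ℝ) (q : E) : Matrix ι ι ℝ :=
  Matrix.of fun i j => fderiv ℝ (u i) q (e j)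

variable {e : ι → E} {u : ι → E → ℝ} {F G : E → ℝ} {p : E}

theorem differentiableAt_convectiveDeriv (hu : ∀ i, DifferentiableAt ℝ (u i) p)
    (hF : DifferentiableAt ℝ (fderiv ℝ F) p) :
    DifferentiableAt ℝ (convectiveDeriv e u F) p := by
  unfold convectiveDeriv
  fun_prop

theorem fderiv_convectiveDeriv_apply (hu : ∀ i, DifferentiableAt ℝ (u i) p)
    (hF : DifferentiableAt ℝ (fderiv ℝ F) p) (s : E) :
    fderiv ℝ (convectiveDeriv e u F) p s =
      ∑ i, (fderiv ℝ (u i) p s * fderiv ℝ F p (e i) + u i p * fderiv ℝ (fderiv ℝ F) p s (e i)) := by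
  unfold convectiveDeriv
  rw [fderiv_fun_sum (A := fun i q => u i q * fderiv ℝ F q (e i))
    fun i _ => (hu i).mul (by fun_prop), sum_apply]
  refine Finset.sum_congr rfl fun i _ => ?_
  rw [fderiv_fun_mul (hu i) (by fun_prop), add_apply, smul_apply, smul_apply,
    fderiv_fderiv_apply hF, smul_eq_mul, smul_eq_mul]
  ring

theorem fderiv_convectiveDeriv_sub_of_eventually_const (hu : ∀ i, DifferentiableAt ℝ (u i) p)
    (hF : ContDiffAt ℝ 2 F p) (hG : ContDiffAt ℝ 2 G p) {s t : E} {c : ℝ}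
    (hcurl : ∀ᶠ q in 𝓝 p, fderiv ℝ G q s - fderiv ℝ F q t = c) :
    fderiv ℝ (convectiveDeriv e u G) p s - fderiv ℝ (convectiveDeriv e u F) p t =
      ∑ i, (fderiv ℝ (u i) p s * fderiv ℝ G p (e i) - fderiv ℝ (u i) p t * fderiv ℝ F p (e i)) := by
  have hF' := (hF.fderiv_right (m := 1) le_rfl).differentiableAt one_ne_zero
  have hG' := (hG.fderiv_right (m := 1) le_rfl).differentiableAt one_ne_zero
  have hcurl' (x : E) : fderiv ℝ (fderiv ℝ G) p s x - fderiv ℝ (fderiv ℝ F) p t x = 0 := by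
    have h := congrArg (· x) (fderiv_eq_zero_of_eventually_eq_const hcurl)
    simp only [fderiv_fun_sub (hG'.clm_apply (differentiableAt_const s))
      (hF'.clm_apply (differentiableAt_const t)), sub_apply,
      fderiv_fderiv_apply hF', fderiv_fderiv_apply hG', zero_apply] at h
    rw [(hG.isSymmSndFDerivAt (by simp)).eq, (hF.isSymmSndFDerivAt (by simp)).eq, h]
  rw [fderiv_convectiveDeriv_apply hu hG', fderiv_convectiveDeriv_apply hu hF',
    ← Finset.sum_sub_distrib]
  refine Finset.sum_congr rfl fun i _ => ?_
  linear_combination u i p * hcurl' (e i)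

theorem velocityGradient_mul_self_isSymm (hu : ∀ i, ContDiffAt ℝ 2 (u i) p) {P : E → ℝ}
    (hP : ContDiffAt ℝ 2 P p) {ρ : ℝ} (hρ : ρ ≠ 0)
    (hmom : ∀ i, ∃ C, ∀ᶠ q in 𝓝 p, ρ * convectiveDeriv e u (u i) q + fderiv ℝ P q (e i) = C)
    (hvort : ∃ W, ∀ᶠ q in 𝓝 p, velocityGradient e u q - (velocityGradient e u q)ᵀ = W) :
    (velocityGradient e u p * velocityGradient e u p).IsSymm := by
  have hud i := (hu i).differentiableAt two_ne_zero
  have hP' := (hP.fderiv_right (m := 1) le_rfl).differentiableAt one_ne_zero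
  have hmom' (i : ι) (s : E) :
      ρ * fderiv ℝ (convectiveDeriv e u (u i)) p s + fderiv ℝ (fderiv ℝ P) p s (e i) = 0 := by
    obtain ⟨C, hC⟩ := hmom i
    have h := congrArg (· s) (fderiv_eq_zero_of_eventually_eq_const hC)
    have hconv := differentiableAt_convectiveDeriv (e := e) hud
      (((hu i).fderiv_right (m := 1) le_rfl).differentiableAt one_ne_zero)
    simpa [fderiv_fun_add (hconv.const_mul ρ) (hP'.clm_apply (differentiableAt_const (e i))),
      fderiv_const_mul hconv, fderiv_fderiv_apply hP'] using h
  obtain ⟨W, hW⟩ := hvort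
  refine Matrix.IsSymm.ext fun i j => ?_
  have hcurl : ∀ᶠ q in 𝓝 p, fderiv ℝ (u j) q (e i) - fderiv ℝ (u i) q (e j) = W j i :=
    hW.mono fun q hq => congrFun (congrFun hq j) i
  have h := fderiv_convectiveDeriv_sub_of_eventually_const (e := e) hud (hu i) (hu j) hcurl
  have hsub : fderiv ℝ (convectiveDeriv e u (u j)) p (e i)
      - fderiv ℝ (convectiveDeriv e u (u i)) p (e j) = 0 := by
    have := (hP.isSymmSndFDerivAt (by simp)).eq (e i) (e j)
    refine (mul_eq_zero.mp ?_).resolve_left hρ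
    linear_combination hmom' j (e i) - hmom' i (e j) - this
  simp only [Matrix.mul_apply, velocityGradient, Matrix.of_apply]
  rw [← sub_eq_zero, ← Finset.sum_sub_distrib, ← hsub, h]
  exact Finset.sum_congr rfl fun k _ => by ring

end ConvectiveDeriv

theorem Matrix.mulVec_curl_eq_zero {R : Type*} [CommRing R] {A : Matrix (Fin 3) (Fin 3) R}
    (htr : A.trace = 0) (hsym : (A * A).IsSymm) :
    A *ᵥ ![A 2 1 - A 1 2, A 0 2 - A 2 0, A 1 0 - A 0 1] = 0 := by
  have h01 := hsym.apply 0 1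
  have h02 := hsym.apply 0 2
  have h12 := hsym.apply 1 2
  simp only [Matrix.mul_apply, Fin.sum_univ_three] at h01 h02 h12
  simp only [Matrix.trace, Matrix.diag, Fin.sum_univ_three] at htr
  ext i
  fin_cases i <;>
    simp only [Fin.zero_eta, Fin.mk_one, Fin.reduceFinMk, Fin.isValue, Matrix.mulVec, dotProduct,
      Fin.sum_univ_three, Matrix.cons_val, Matrix.cons_val_zero, Matrix.cons_val_one, Pi.zero_apply]
  · linear_combination (A 2 1 - A 1 2) * htr - h12
  · linear_combination (A 0 2 - A 2 0) * htr + h02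
  · linear_combination (A 1 0 - A 0 1) * htr - h01

section StdFrame

def stdFrame : Fin 3 → ℝ × ℝ × ℝ := ![(1, 0, 0), (0, 1, 0), (0, 0, 1)]

variable {u v w : ℝ × ℝ × ℝ → ℝ} {p : ℝ × ℝ × ℝ}

theorem convectiveDeriv_stdFrame (F : ℝ × ℝ × ℝ → ℝ) (q : ℝ × ℝ × ℝ) :
    convectiveDeriv stdFrame ![u, v, w] F q = u q * pdx F q + v q * pdy F q + w q * pdz F q := by
  simp [convectiveDeriv, stdFrame, Fin.sum_univ_three, pdx, pdy, pdz, add_assoc]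

theorem velocityGradient_stdFrame (q : ℝ × ℝ × ℝ) :
    velocityGradient stdFrame ![u, v, w] q =
      !![pdx u q, pdy u q, pdz u q; pdx v q, pdy v q, pdz v q; pdx w q, pdy w q, pdz w q] := by
  ext i j
  fin_cases i <;> fin_cases j <;> rfl

theorem exists_eventually_momentum_stdFrame {P : ℝ × ℝ × ℝ → ℝ} {ρ g : ℝ}
    (momx : ∀ᶠ q in 𝓝 p, ρ * (u q * pdx u q + v q * pdy u q + w q * pdz u q) = -(pdx P q))
    (momy : ∀ᶠ q in 𝓝 p, ρ * (u q * pdx v q + v q * pdy v q + w q * pdz v q) = -(pdy P q))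
    (momz : ∀ᶠ q in 𝓝 p,
      ρ * (u q * pdx w q + v q * pdy w q + w q * pdz w q) = -(pdz P q) - ρ * g)
    (i : Fin 3) :
    ∃ C, ∀ᶠ q in 𝓝 p,
      ρ * convectiveDeriv stdFrame ![u, v, w] (![u, v, w] i) q + fderiv ℝ P q (stdFrame i) = C := by
  fin_cases i
  · refine ⟨0, momx.mono fun q hq => ?_⟩
    show ρ * convectiveDeriv stdFrame ![u, v, w] u q + pdx P q = 0
    rw [convectiveDeriv_stdFrame]
    linear_combination hq
  · refine ⟨0, momy.mono fun q hq => ?_⟩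
    show ρ * convectiveDeriv stdFrame ![u, v, w] v q + pdy P q = 0
    rw [convectiveDeriv_stdFrame]
    linear_combination hq
  · refine ⟨-(ρ * g), momz.mono fun q hq => ?_⟩
    show ρ * convectiveDeriv stdFrame ![u, v, w] w q + pdz P q = -(ρ * g)
    rw [convectiveDeriv_stdFrame]
    linear_combination hq

theorem exists_eventually_vorticity_stdFrame {α β γ : ℝ}
    (hcurl : ∀ᶠ q in 𝓝 p,
      (pdy w q - pdz v q, pdz u q - pdx w q, pdx v q - pdy u q) = (α, β, γ)) :
    ∃ W, ∀ᶠ q in 𝓝 p,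
      velocityGradient stdFrame ![u, v, w] q - (velocityGradient stdFrame ![u, v, w] q)ᵀ = W := by
  refine ⟨!![0, -γ, β; γ, 0, -α; -β, α, 0], hcurl.mono fun q hq => ?_⟩
  obtain ⟨hα, hβ, hγ⟩ := Prod.mk.injEq .. ▸ hq
  rw [velocityGradient_stdFrame]
  ext i j
  fin_cases i <;> fin_cases j <;>
    simp only [Fin.zero_eta, Fin.mk_one, Fin.reduceFinMk, Fin.isValue, Matrix.cons_val',
      Matrix.cons_val, Matrix.cons_val_zero, Matrix.cons_val_one, Matrix.cons_val_fin_one,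
      Matrix.sub_apply, Matrix.of_apply, Matrix.transpose_apply] <;>
    linarith

end StdFrame

/-- **Constant vorticity forces directional constancy.** If `(𝐮, P)` is a `C²` solution
of the steady incompressible Euler equations in an open set `Ω ⊆ ℝ³` and the vorticity
`∇ × 𝐮 ≡ ω = (α, β, γ)` is constant, then `(ω·∇)𝐮 = 0` in `Ω`. -/
theorem constant_vorticity_directional_derivative
    (Ω : Set (ℝ × ℝ × ℝ)) (hΩ : IsOpen Ω) (ρ g : ℝ) (hρ : 0 < ρ)
    (u v w P : ℝ × ℝ × ℝ → ℝ)
    (hu : ContDiffOn ℝ 2 u Ω) (hv : ContDiffOn ℝ 2 v Ω) (hw : ContDiffOn ℝ 2 w Ω)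
    (hP : ContDiffOn ℝ 2 P Ω)
    (momx : ∀ p ∈ Ω, ρ * (u p * pdx u p + v p * pdy u p + w p * pdz u p) = -(pdx P p))
    (momy : ∀ p ∈ Ω, ρ * (u p * pdx v p + v p * pdy v p + w p * pdz v p) = -(pdy P p))
    (momz : ∀ p ∈ Ω,
      ρ * (u p * pdx w p + v p * pdy w p + w p * pdz w p) = -(pdz P p) - ρ * g)
    (hdiv : ∀ p ∈ Ω, pdx u p + pdy v p + pdz w p = 0)
    (α β γ : ℝ)
    (hcurl : ∀ p ∈ Ω,
      (pdy w p - pdz v p, pdz u p - pdx w p, pdx v p - pdy u p) = (α, β, γ)) :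
    ∀ p ∈ Ω,
      α * pdx u p + β * pdy u p + γ * pdz u p = 0 ∧
      α * pdx v p + β * pdy v p + γ * pdz v p = 0 ∧
      α * pdx w p + β * pdy w p + γ * pdz w p = 0 := by
  intro p hp
  have hΩp : Ω ∈ 𝓝 p := hΩ.mem_nhds hp
  have hU (i : Fin 3) : ContDiffAt ℝ 2 (![u, v, w] i) p := by
    fin_cases i
    exacts [hu.contDiffAt hΩp, hv.contDiffAt hΩp, hw.contDiffAt hΩp]
  have hA := Matrix.mulVec_curl_eq_zero (A := velocityGradient stdFrame ![u, v, w] p)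
    (by simpa [velocityGradient_stdFrame, Matrix.trace, Fin.sum_univ_three] using hdiv p hp)
    (velocityGradient_mul_self_isSymm hU (hP.contDiffAt hΩp) hρ.ne'
      (exists_eventually_momentum_stdFrame (eventually_of_mem hΩp momx)
        (eventually_of_mem hΩp momy) (eventually_of_mem hΩp momz))
      (exists_eventually_vorticity_stdFrame (eventually_of_mem hΩp hcurl)))
  obtain ⟨rfl, rfl, rfl⟩ := Prod.mk.injEq .. ▸ hcurl p hp
  simpa [velocityGradient_stdFrame, funext_iff, Fin.forall_fin_succ, add_assoc] using hA
end
end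

section
/- Let α, β, γ ∈ ℝ with (α,β) ≠ (0,0), and let ψ ∈ C²(ℝ²;ℝ) satisfy on all of ℝ² the system: β ∂ₓ∂ᵧψ − α ∂ᵧ²ψ = 0, −β ∂ₓ²ψ + α ∂ₓ∂ᵧψ = 0, and ∂ₓ²ψ + ∂ᵧ²ψ = −γ. Then the second derivatives of ψ are everywhere equal to the constants ∂ₓ²ψ = −α²γ/(α²+β²), ∂ₓ∂ᵧψ = −αβγ/(α²+β²), ∂ᵧ²ψ = −β²γ/(α²+β²). If in addition the gradient ∇ψ is bounded on ℝ², then γ = 0 and all second derivatives of ψ vanish identically. -/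
/-! A function of one variable with constant derivative `a` is affine, so it can only be bounded
if `a = 0`. The three equations form a linear system for the second derivatives at each point,
uniquely solvable since `α² + β² ≠ 0`; hence `ψ_xx` and `ψ_yy` are constants. Along a coordinate
line the corresponding first partial then has constant derivative and is bounded by the bound on
`∇ψ`, so `ψ_xx = ψ_yy = 0`, and `γ = -Δψ = 0`. -/

noncomputable section

/-- Partial derivative in the first-coordinate direction of a function on `ℝ × ℝ`. -/
def pdx2 (f : ℝ × ℝ → ℝ) (q : ℝ × ℝ) : ℝ := fderiv ℝ f q (1, 0)

/-- Partial derivative in the second-coordinate direction of a function on `ℝ × ℝ`. -/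
def pdy2 (f : ℝ × ℝ → ℝ) (q : ℝ × ℝ) : ℝ := fderiv ℝ f q (0, 1)

theorem eq_zero_of_forall_hasDerivAt_of_bounded {E : Type*} [NormedAddCommGroup E]
    [NormedSpace ℝ E] {f : ℝ → E} {a : E} {C : ℝ}
    (hf : ∀ t, HasDerivAt f a t) (hb : ∀ t, ‖f t‖ ≤ C) : a = 0 := by
  have affine : ∀ t, f t - f 0 = t • a := by
    intro t
    have hg : ∀ s : ℝ, HasDerivAt (fun s => f s - s • a) 0 s := fun s => by
      have h := (hf s).sub ((hasDerivAt_id s).smul_const a)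
      rwa [one_smul, sub_self] at h
    have := is_const_of_deriv_eq_zero (fun s => (hg s).differentiableAt)
      (fun s => (hg s).deriv) t 0
    rw [zero_smul, sub_zero] at this
    rw [← this, sub_sub_cancel]
  have growth : ∀ t : ℝ, |t| * ‖a‖ ≤ 2 * C := fun t =>
    calc |t| * ‖a‖ = ‖f t - f 0‖ := by rw [affine, norm_smul, Real.norm_eq_abs]
      _ ≤ ‖f t‖ + ‖f 0‖ := norm_sub_le _ _
      _ ≤ 2 * C := by linarith [hb t, hb 0]
  by_contra ha
  have ha_pos : 0 < ‖a‖ := norm_pos_iff.mpr ha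
  have hC_nonneg : 0 ≤ C := (norm_nonneg _).trans (hb 0)
  have := growth ((2 * C + 1) / ‖a‖)
  rw [abs_of_nonneg (by positivity), div_mul_cancel₀ _ ha_pos.ne'] at this
  linarith

theorem eq_zero_of_fderiv_fderiv_apply_eq_of_bounded {E F : Type*} [NormedAddCommGroup E]
    [NormedSpace ℝ E] [NormedAddCommGroup F] [NormedSpace ℝ F] {f : E → F} {v : E} {a : F}
    {C : ℝ} (hdiff : Differentiable ℝ fun x => fderiv ℝ f x v)
    (hconst : ∀ x, fderiv ℝ (fun x => fderiv ℝ f x v) x v = a)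
    (hbound : ∀ x, ‖fderiv ℝ f x‖ ≤ C) : a = 0 := by
  refine eq_zero_of_forall_hasDerivAt_of_bounded
    (f := fun t : ℝ => fderiv ℝ f (t • v) v) (C := C * ‖v‖) (fun t => ?_)
    (fun t => (fderiv ℝ f (t • v)).le_of_opNorm_le (hbound _) v)
  have := (hdiff (t • v)).hasFDerivAt.comp_hasDerivAt t ((hasDerivAt_id t).smul_const v)
  rw [one_smul, hconst] at this
  exact this

theorem reduced_system_solution {α β γ a b c : ℝ} (hs : α ^ 2 + β ^ 2 ≠ 0)
    (e1 : β * b - α * c = 0) (e2 : -β * a + α * b = 0) (e3 : a + c = -γ) :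
    a = -(α ^ 2 * γ) / (α ^ 2 + β ^ 2) ∧
      b = -(α * β * γ) / (α ^ 2 + β ^ 2) ∧
      c = -(β ^ 2 * γ) / (α ^ 2 + β ^ 2) := by
  refine ⟨?_, ?_, ?_⟩ <;> rw [eq_div_iff hs]
  · linear_combination α ^ 2 * e3 + α * e1 - β * e2
  · linear_combination α * β * e3 + β * e1 + α * e2
  · linear_combination β ^ 2 * e3 - α * e1 + β * e2

theorem sq_add_sq_ne_zero_of_pair_ne_zero {α β : ℝ} (h : (α, β) ≠ (0, 0)) : α ^ 2 + β ^ 2 ≠ 0 := by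
  intro hs
  obtain ⟨hα, hβ⟩ := (add_eq_zero_iff_of_nonneg (sq_nonneg α) (sq_nonneg β)).mp hs
  exact h (by rw [pow_eq_zero_iff two_ne_zero] at hα hβ; rw [hα, hβ])

/-- **The reduced stream function system.** If `ψ ∈ C²(ℝ²)` satisfies
`β ψ_{xy} - α ψ_{yy} = 0`, `-β ψ_{xx} + α ψ_{xy} = 0`, and `Δψ = -γ` with
`(α, β) ≠ (0,0)`, then all second derivatives of `ψ` are the indicated constants;
moreover, if `∇ψ` is bounded on `ℝ²`, then `γ = 0` and all second derivatives of `ψ`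
vanish identically. -/
theorem reduced_stream_function
    (α β γ : ℝ) (hαβ : (α, β) ≠ ((0 : ℝ), (0 : ℝ)))
    (ψ : ℝ × ℝ → ℝ) (hψ : ContDiff ℝ 2 ψ)
    (h1 : ∀ q : ℝ × ℝ, β * pdy2 (pdx2 ψ) q - α * pdy2 (pdy2 ψ) q = 0)
    (h2 : ∀ q : ℝ × ℝ, -β * pdx2 (pdx2 ψ) q + α * pdy2 (pdx2 ψ) q = 0)
    (h3 : ∀ q : ℝ × ℝ, pdx2 (pdx2 ψ) q + pdy2 (pdy2 ψ) q = -γ) :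
    (∀ q : ℝ × ℝ,
      pdx2 (pdx2 ψ) q = -(α ^ 2 * γ) / (α ^ 2 + β ^ 2) ∧
      pdy2 (pdx2 ψ) q = -(α * β * γ) / (α ^ 2 + β ^ 2) ∧
      pdy2 (pdy2 ψ) q = -(β ^ 2 * γ) / (α ^ 2 + β ^ 2)) ∧
    ((∃ C : ℝ, ∀ q : ℝ × ℝ, ‖fderiv ℝ ψ q‖ ≤ C) →
      γ = 0 ∧ ∀ q : ℝ × ℝ,
        pdx2 (pdx2 ψ) q = 0 ∧ pdy2 (pdx2 ψ) q = 0 ∧ pdy2 (pdy2 ψ) q = 0) := by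
  have key := fun q =>
    reduced_system_solution (sq_add_sq_ne_zero_of_pair_ne_zero hαβ) (h1 q) (h2 q) (h3 q)
  refine ⟨key, ?_⟩
  rintro ⟨C, hC⟩
  have hdiff : ∀ v, Differentiable ℝ fun q => fderiv ℝ ψ q v := fun v =>
    ((hψ.fderiv_right (m := 1) (by norm_num)).differentiable (by norm_num)).clm_apply
      (differentiable_const v)
  have hxx := eq_zero_of_fderiv_fderiv_apply_eq_of_bounded (hdiff _) (fun q => (key q).1) hC
  have hyy := eq_zero_of_fderiv_fderiv_apply_eq_of_bounded (hdiff _) (fun q => (key q).2.2) hC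
  have hγ : γ = 0 := by
    have := h3 0
    rw [(key 0).1, (key 0).2.2, hxx, hyy] at this
    linarith
  exact ⟨hγ, fun q => by simpa [hγ] using key q⟩
end
end

section
/- Let h > 0 and c > −h, and let w : ℝ × [−h, c) → ℝ be continuously differentiable on ℝ × [−h, c) and harmonic in the open strip ℝ × (−h, c) (coordinates (x,z)). If w(x, −h) = 0 and ∂_z w(x, −h) = 0 for every x ∈ ℝ, then w ≡ 0 on ℝ × [−h, c). -/
noncomputable section

/-!
Identify `ℝ × ℝ` with `ℂ`. The function `F = ∂ₓw - i ∂_z w` is holomorphic in the open strip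
(its Cauchy–Riemann equations are the harmonicity of `w` and the symmetry of its second
derivative), continuous up to the bed, and zero on the bed, where both the tangential derivative
(since `w = 0` there) and the normal derivative of `w` vanish. Extended by zero below the bed, `F`
is continuous on the half-plane `im < c` and holomorphic off the line `im = -h`. Cutting a
rectangle along that line into two rectangles whose interiors avoid it shows that all rectangle
integrals of `F` vanish, so `F` is holomorphic on the half-plane by Morera's theorem, and
vanishes identically by the identity theorem. Hence `∂_z w = 0` on the strip, and `w` is constant
on vertical segments, equal to its value `0` on the bed.
-/

open Complex Set Filter Topology MeasureTheory intervalIntegral InnerProductSpace Laplacian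
open scoped Interval

namespace Complex

variable {E : Type*} [NormedAddCommGroup E] {f : ℂ → E} {a : ℝ} {z w : ℂ}

lemma intervalIntegrable_vertical_of_continuousOn_rectangle
    (hc : ContinuousOn f (Rectangle z w)) {x y₁ y₂ : ℝ} (hx : x ∈ [[z.re, w.re]])
    (h₁ : y₁ ∈ [[z.im, w.im]]) (h₂ : y₂ ∈ [[z.im, w.im]]) :
    IntervalIntegrable (fun y : ℝ ↦ f (x + y * I)) volume y₁ y₂ := by
  refine (hc.comp (by fun_prop) fun y hy ↦ ?_).intervalIntegrable
  simpa [Rectangle, mem_reProdIm, hx] using uIcc_subset_uIcc h₁ h₂ hy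

variable [NormedSpace ℂ E]

lemma wedgeIntegral_add_wedgeIntegral_eq_zero_of_notMem_Ioo
    (hc : ContinuousOn f (Rectangle z w))
    (hd : DifferentiableOn ℂ f (Rectangle z w \ {ζ | ζ.im = a}))
    (ha : a ∉ Ioo (min z.im w.im) (max z.im w.im)) :
    wedgeIntegral z w f + wedgeIntegral w z f = 0 := by
  rw [wedgeIntegral_add_wedgeIntegral_eq]
  refine integral_boundary_rect_eq_zero_of_continuousOn_of_differentiableOn f z w hc (hd.mono ?_)
  rintro ζ ⟨hre, him⟩
  exact ⟨⟨Ioo_subset_Icc_self hre, Ioo_subset_Icc_self him⟩, fun h ↦ ha (h ▸ him)⟩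

lemma wedgeIntegral_add_wedgeIntegral_split_im (hc : ContinuousOn f (Rectangle z w))
    (ha : a ∈ [[z.im, w.im]]) :
    wedgeIntegral z w f + wedgeIntegral w z f =
      (wedgeIntegral z ⟨w.re, a⟩ f + wedgeIntegral ⟨w.re, a⟩ z f) +
        (wedgeIntegral ⟨z.re, a⟩ w f + wedgeIntegral w ⟨z.re, a⟩ f) := by
  simp only [wedgeIntegral_add_wedgeIntegral_eq]
  rw [← integral_add_adjacent_intervals
      (intervalIntegrable_vertical_of_continuousOn_rectangle hc right_mem_uIcc left_mem_uIcc ha)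
      (intervalIntegrable_vertical_of_continuousOn_rectangle hc right_mem_uIcc ha right_mem_uIcc),
    ← integral_add_adjacent_intervals
      (intervalIntegrable_vertical_of_continuousOn_rectangle hc left_mem_uIcc left_mem_uIcc ha)
      (intervalIntegrable_vertical_of_continuousOn_rectangle hc left_mem_uIcc ha right_mem_uIcc)]
  simp only [smul_add]
  abel

theorem isConservativeOn_of_differentiableOn_diff_im_eq {U : Set ℂ} (hc : ContinuousOn f U)
    (hd : DifferentiableOn ℂ f (U \ {ζ | ζ.im = a})) : IsConservativeOn f U := by
  intro z w hzw
  rw [← add_eq_zero_iff_eq_neg]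
  by_cases ha : a ∈ Ioo (min z.im w.im) (max z.im w.im)
  · have ha' : a ∈ [[z.im, w.im]] := Ioo_subset_Icc_self ha
    have hlow : Rectangle z ⟨w.re, a⟩ ⊆ U := (reProdIm_subset_iff.2 (prod_mono le_rfl
      (uIcc_subset_uIcc left_mem_uIcc ha'))).trans hzw
    have hup : Rectangle ⟨z.re, a⟩ w ⊆ U := (reProdIm_subset_iff.2 (prod_mono le_rfl
      (uIcc_subset_uIcc ha' right_mem_uIcc))).trans hzw
    rw [wedgeIntegral_add_wedgeIntegral_split_im (hc.mono hzw) ha',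
      wedgeIntegral_add_wedgeIntegral_eq_zero_of_notMem_Ioo (hc.mono hlow)
        (hd.mono (sdiff_subset_sdiff_left hlow)) (by grind),
      wedgeIntegral_add_wedgeIntegral_eq_zero_of_notMem_Ioo (hc.mono hup)
        (hd.mono (sdiff_subset_sdiff_left hup)) (by grind), add_zero]
  · exact wedgeIntegral_add_wedgeIntegral_eq_zero_of_notMem_Ioo (hc.mono hzw)
      (hd.mono (sdiff_subset_sdiff_left hzw)) ha

variable [CompleteSpace E]

theorem differentiableOn_of_differentiableOn_diff_im_eq {U : Set ℂ} (hU : IsOpen U)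
    (hc : ContinuousOn f U) (hd : DifferentiableOn ℂ f (U \ {ζ | ζ.im = a})) :
    DifferentiableOn ℂ f U :=
  (isConservativeOn_and_continuousOn_iff_isDifferentiableOn hU).1
    ⟨isConservativeOn_of_differentiableOn_diff_im_eq hc hd, hc⟩

theorem eqOn_zero_of_eq_zero_on_im_eq {b : ℝ} (hc : ContinuousOn f {ζ | a ≤ ζ.im ∧ ζ.im < b})
    (hd : DifferentiableOn ℂ f {ζ | a < ζ.im ∧ ζ.im < b}) (h₀ : ∀ ζ : ℂ, ζ.im = a → f ζ = 0) :
    EqOn f 0 {ζ | a ≤ ζ.im ∧ ζ.im < b} := by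
  set T := {ζ : ℂ | a ≤ ζ.im}
  set g := T.indicator f
  set H := {ζ : ℂ | ζ.im < b}
  have hH : IsOpen H := isOpen_lt continuous_im continuous_const
  have hgc : ContinuousOn g H := by
    refine ContinuousOn.if (fun ζ hζ ↦ ?_) (hc.mono fun ζ hζ ↦ ?_) continuousOn_const
    · exact h₀ ζ (frontier_le_subset_eq continuous_const continuous_im hζ.2).symm
    · exact ⟨(isClosed_le continuous_const continuous_im).closure_subset hζ.2, hζ.1⟩
  have hgd : DifferentiableOn ℂ g (H \ {ζ | ζ.im = a}) := by
    rintro ζ ⟨hζb, hζa⟩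
    refine DifferentiableAt.differentiableWithinAt ?_
    rcases lt_or_gt_of_ne hζa with hlt | hgt
    · refine (differentiableAt_const (0 : E)).congr_of_eventuallyEq ?_
      filter_upwards [(isOpen_lt continuous_im continuous_const).mem_nhds hlt] with ξ hξ
      exact indicator_of_notMem (show ξ ∉ T from not_le.2 hξ) f
    · have hstrip : {ξ : ℂ | a < ξ.im ∧ ξ.im < b} ∈ 𝓝 ζ :=
        ((isOpen_lt continuous_const continuous_im).inter hH).mem_nhds ⟨hgt, hζb⟩
      refine (hd.differentiableAt hstrip).congr_of_eventuallyEq ?_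
      filter_upwards [hstrip] with ξ hξ
      exact indicator_of_mem (show ξ ∈ T from hξ.1.le) f
  have hg : EqOn g 0 H := by
    refine ((differentiableOn_of_differentiableOn_diff_im_eq hH hgc hgd).analyticOnNhd hH)
      |>.eqOn_zero_of_preconnected_of_eventuallyEq_zero (convex_halfSpace_im_lt b).isPreconnected
        (z₀ := ⟨0, min a b - 1⟩) (show _ < b by linarith [min_le_right a b]) ?_
    filter_upwards [(isOpen_lt continuous_im continuous_const).mem_nhds
      (show (⟨0, min a b - 1⟩ : ℂ).im < a by linarith [min_le_left a b])] with ξ hξ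
    exact indicator_of_notMem (show ξ ∉ T from not_le.2 hξ) f
  intro ζ hζ
  rw [← hg hζ.2]
  exact (indicator_of_mem (show ζ ∈ T from hζ.1) f).symm

end Complex

lemma fderiv_fderiv_apply_eq {𝕜 E F : Type*} [NontriviallyNormedField 𝕜] [NormedAddCommGroup E]
    [NormedSpace 𝕜 E] [NormedAddCommGroup F] [NormedSpace 𝕜 F] {f : E → F} {x u : E}
    (hf : ContDiffAt 𝕜 2 f x) :
    fderiv 𝕜 (fun y ↦ fderiv 𝕜 f y u) x u = fderiv 𝕜 (fderiv 𝕜 f) x u u := by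
  rw [fderiv_clm_apply ((hf.fderiv_right le_rfl).differentiableAt one_ne_zero)
    (differentiableAt_const u)]
  simp

section
variable {w : ℝ × ℝ → ℝ}

lemma pdx2_pdx2_eq {q : ℝ × ℝ} (hw : ContDiffAt ℝ 2 w q) :
    pdx2 (pdx2 w) q = fderiv ℝ (fderiv ℝ w) q (1, 0) (1, 0) :=
  fderiv_fderiv_apply_eq hw

lemma pdy2_pdy2_eq {q : ℝ × ℝ} (hw : ContDiffAt ℝ 2 w q) :
    pdy2 (pdy2 w) q = fderiv ℝ (fderiv ℝ w) q (0, 1) (0, 1) :=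
  fderiv_fderiv_apply_eq hw

lemma laplacian_comp_equivRealProdCLM {z : ℂ} (hw : ContDiffAt ℝ 2 w (equivRealProdCLM z)) :
    Δ (w ∘ equivRealProdCLM) z =
      pdx2 (pdx2 w) (equivRealProdCLM z) + pdy2 (pdy2 w) (equivRealProdCLM z) := by
  have hcomp : iteratedFDeriv ℝ 2 (w ∘ equivRealProdCLM) z =
      (iteratedFDeriv ℝ 2 w (equivRealProdCLM z)).compContinuousLinearMap
        fun _ ↦ (equivRealProdCLM : ℂ →L[ℝ] ℝ × ℝ) := by
    simpa [iteratedFDerivWithin_univ] using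
      equivRealProdCLM.iteratedFDerivWithin_comp_right w uniqueDiffOn_univ (mem_univ z) 2
  rw [laplacian_eq_iteratedFDeriv_complexPlane, pdx2_pdx2_eq hw, pdy2_pdy2_eq hw]
  simp [hcomp, iteratedFDeriv_two_apply]

lemma harmonicAt_comp_equivRealProdCLM {O : Set (ℝ × ℝ)} (hO : IsOpen O)
    (hw : ContDiffOn ℝ 2 w O) (hharm : ∀ q ∈ O, pdx2 (pdx2 w) q + pdy2 (pdy2 w) q = 0) {z : ℂ}
    (hz : equivRealProdCLM z ∈ O) : HarmonicAt (w ∘ equivRealProdCLM) z := by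
  refine ⟨(hw.contDiffAt (hO.mem_nhds hz)).comp z equivRealProdCLM.contDiff.contDiffAt, ?_⟩
  filter_upwards [(hO.preimage equivRealProdCLM.continuous).mem_nhds hz] with ζ hζ
  rw [laplacian_comp_equivRealProdCLM (hw.contDiffAt (hO.mem_nhds hζ))]
  exact hharm _ hζ

def complexGradWithin (w : ℝ × ℝ → ℝ) (S : Set (ℝ × ℝ)) (ζ : ℂ) : ℂ :=
  (fderivWithin ℝ w S (ζ.re, ζ.im) (1, 0) : ℂ) - I * fderivWithin ℝ w S (ζ.re, ζ.im) (0, 1)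

variable {S : Set (ℝ × ℝ)}

lemma continuousOn_complexGradWithin (hw : ContDiffOn ℝ 1 w S) (hS : UniqueDiffOn ℝ S) :
    ContinuousOn (complexGradWithin w S) (equivRealProdCLM ⁻¹' S) := by
  have hD := (hw.continuousOn_fderivWithin hS le_rfl).comp
    equivRealProdCLM.continuous.continuousOn (mapsTo_preimage _ _)
  exact (continuous_ofReal.comp_continuousOn (hD.clm_apply continuousOn_const)).sub
    (continuousOn_const.mul (continuous_ofReal.comp_continuousOn (hD.clm_apply continuousOn_const)))

lemma differentiableAt_complexGradWithin {O : Set (ℝ × ℝ)} (hO : IsOpen O) (hOS : O ⊆ S)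
    (hw : ContDiffOn ℝ 2 w O) (hharm : ∀ q ∈ O, pdx2 (pdx2 w) q + pdy2 (pdy2 w) q = 0) {z : ℂ}
    (hz : equivRealProdCLM z ∈ O) : DifferentiableAt ℂ (complexGradWithin w S) z := by
  refine (HarmonicAt.differentiableAt_complex_partial
    (harmonicAt_comp_equivRealProdCLM hO hw hharm hz)).congr_of_eventuallyEq ?_
  filter_upwards [(hO.preimage equivRealProdCLM.continuous).mem_nhds hz] with ζ hζ
  have hSζ : S ∈ 𝓝 (ζ.re, ζ.im) := mem_of_superset (hO.mem_nhds hζ) hOS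
  simp [complexGradWithin, fderivWithin_of_mem_nhds hSζ, equivRealProdCLM.comp_right_fderiv]

lemma fderivWithin_apply_one_zero_eq_zero {x y : ℝ} (hw : DifferentiableWithinAt ℝ w S (x, y))
    (hS : ∀ t : ℝ, (t, y) ∈ S) (h₀ : ∀ t : ℝ, w (t, y) = 0) :
    fderivWithin ℝ w S (x, y) (1, 0) = 0 := by
  have hline : HasDerivAt (fun t : ℝ ↦ (t, y)) (1, 0) x :=
    (hasDerivAt_id x).prodMk (hasDerivAt_const x y)
  have hcomp := hw.hasFDerivWithinAt.comp_hasDerivWithinAt x hline.hasDerivWithinAt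
    (fun t _ ↦ hS t) (s := univ)
  rw [hasDerivWithinAt_univ] at hcomp
  refine hcomp.unique ?_
  simpa [Function.comp_def, h₀] using hasDerivAt_const x (0 : ℝ)

lemma apply_eq_of_fderivWithin_apply_zero_one_eq_zero {a b : ℝ}
    (hw : DifferentiableOn ℝ w {q | a ≤ q.2 ∧ q.2 < b})
    (h₀ : ∀ q ∈ {q : ℝ × ℝ | a ≤ q.2 ∧ q.2 < b},
      fderivWithin ℝ w {q | a ≤ q.2 ∧ q.2 < b} q (0, 1) = 0)
    {x t : ℝ} (hat : a ≤ t) (htb : t < b) : w (x, t) = w (x, a) := by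
  have hmaps : MapsTo (fun s : ℝ ↦ (x, s)) (Ico a b) {q | a ≤ q.2 ∧ q.2 < b} :=
    fun s hs ↦ hs
  refine constant_of_has_deriv_right_zero (f := fun s ↦ w (x, s)) (b := t)
    (hw.continuousOn.comp (by fun_prop) fun s hs ↦ ⟨hs.1, hs.2.trans_lt htb⟩) (fun s hs ↦ ?_)
    t ⟨hat, le_rfl⟩
  have hs : s ∈ Ico a b := ⟨hs.1, hs.2.trans htb⟩
  have hline : HasDerivWithinAt (fun s : ℝ ↦ (x, s)) (0, 1) (Ico a b) s :=
    ((hasDerivAt_const s x).prodMk (hasDerivAt_id s)).hasDerivWithinAt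
  have hcomp := (hw _ (hmaps hs)).hasFDerivWithinAt.comp_hasDerivWithinAt s hline hmaps
  rw [h₀ _ (hmaps hs)] at hcomp
  exact hcomp.mono_of_mem_nhdsWithin (Ico_mem_nhdsGE_of_mem hs)

end

theorem harmonic_cauchy_data_on_bed_general
    (h c : ℝ) (hc : -h < c)
    (w : ℝ × ℝ → ℝ)
    (hw_C1 : ContDiffOn ℝ 1 w {q : ℝ × ℝ | -h ≤ q.2 ∧ q.2 < c})
    (hw_C2 : ContDiffOn ℝ 2 w {q : ℝ × ℝ | -h < q.2 ∧ q.2 < c})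
    (hw_harm : ∀ q ∈ {q : ℝ × ℝ | -h < q.2 ∧ q.2 < c},
      pdx2 (pdx2 w) q + pdy2 (pdy2 w) q = 0)
    (hw_bed : ∀ x : ℝ, w (x, -h) = 0)
    (hw_bed' : ∀ x : ℝ,
      fderivWithin ℝ w {q : ℝ × ℝ | -h ≤ q.2 ∧ q.2 < c} (x, -h) (0, 1) = 0) :
    ∀ q ∈ {q : ℝ × ℝ | -h ≤ q.2 ∧ q.2 < c}, w q = 0 := by
  set S := {q : ℝ × ℝ | -h ≤ q.2 ∧ q.2 < c}
  have hO : IsOpen {q : ℝ × ℝ | -h < q.2 ∧ q.2 < c} :=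
    (isOpen_lt continuous_const continuous_snd).inter (isOpen_lt continuous_snd continuous_const)
  have hS : UniqueDiffOn ℝ S := by
    have hprod : S = univ ×ˢ Ico (-h) c := by ext; simp [S]
    exact hprod ▸ uniqueDiffOn_univ.prod (uniqueDiffOn_Ico (-h) c)
  have hw : DifferentiableOn ℝ w S := hw_C1.differentiableOn one_ne_zero
  have hbed : ∀ ζ : ℂ, ζ.im = -h → complexGradWithin w S ζ = 0 := by
    intro ζ hζ
    have htan := fderivWithin_apply_one_zero_eq_zero (hw (ζ.re, -h) ⟨le_rfl, hc⟩)
      (fun _ ↦ ⟨le_rfl, hc⟩) hw_bed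
    simp [complexGradWithin, hζ, hw_bed', htan]
  have hgrad : EqOn (complexGradWithin w S) 0 {ζ | -h ≤ ζ.im ∧ ζ.im < c} :=
    Complex.eqOn_zero_of_eq_zero_on_im_eq (continuousOn_complexGradWithin hw_C1 hS)
      (fun ζ hζ ↦ (differentiableAt_complexGradWithin (S := S) hO (fun q hq ↦ ⟨hq.1.le, hq.2⟩) hw_C2
        hw_harm hζ).differentiableWithinAt) hbed
  intro q hq
  rw [← hw_bed q.1]
  refine apply_eq_of_fderivWithin_apply_zero_one_eq_zero hw (fun p hp ↦ ?_) hq.1 hq.2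
  simpa [complexGradWithin] using congrArg im (hgrad (show (⟨p.1, p.2⟩ : ℂ) ∈ _ from hp))

/-- **Cauchy data on the bed.** Let `w` be `C¹` on the half-open strip
`ℝ × [-h, c)` and harmonic in its interior. If `w` and its normal derivative `∂_z w`
both vanish on the bottom line `{z = -h}`, then `w ≡ 0` on `ℝ × [-h, c)`. -/
theorem harmonic_cauchy_data_on_bed
    (h c : ℝ) (hh : 0 < h) (hc : -h < c)
    (w : ℝ × ℝ → ℝ)
    (hw_C1 : ContDiffOn ℝ 1 w {q : ℝ × ℝ | -h ≤ q.2 ∧ q.2 < c})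
    (hw_C2 : ContDiffOn ℝ 2 w {q : ℝ × ℝ | -h < q.2 ∧ q.2 < c})
    (hw_harm : ∀ q ∈ {q : ℝ × ℝ | -h < q.2 ∧ q.2 < c},
      pdx2 (pdx2 w) q + pdy2 (pdy2 w) q = 0)
    (hw_bed : ∀ x : ℝ, w (x, -h) = 0)
    (hw_bed' : ∀ x : ℝ,
      fderivWithin ℝ w {q : ℝ × ℝ | -h ≤ q.2 ∧ q.2 < c} (x, -h) (0, 1) = 0) :
    ∀ q ∈ {q : ℝ × ℝ | -h ≤ q.2 ∧ q.2 < c}, w q = 0 :=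
  harmonic_cauchy_data_on_bed_general h c hc w hw_C1 hw_C2 hw_harm hw_bed hw_bed'
end
end

section
/- Let h₁, h₂ > 0 and let w : ℝ × [−h₁, h₂] → ℝ be continuous and bounded on the closed strip (coordinates (x,z)), harmonic in the open strip ℝ × (−h₁, h₂), and satisfy w(x, −h₁) = 0 and w(x, h₂) = 0 for every x ∈ ℝ. Then w ≡ 0. -/
noncomputable section

/-!
A function with positive Laplacian has no interior local maximum (restrict it to lines and use
the second-derivative test), so on a compact set it is bounded by its maximum on the frontier.
For `ε > 0` the function `v = w + ε (2 z² - x²)` has `Δv = 2ε > 0` in the strip `a < z < b`.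
On the rectangle `[-R, R] × [a, b]` it is at most `2ε (a² + b²)` on the horizontal sides, where
`w = 0`, and also on the vertical sides as soon as `ε R²` exceeds the upper bound `C` of `w`.
Hence `w ≤ ε (x² + 2 (a² + b²))` for every `ε > 0`, so `w ≤ 0`; applying this to `-w` gives
`w = 0`.
-/

open Filter Set Topology

theorem IsLocalMax.deriv_deriv_nonpos {f : ℝ → ℝ} {a : ℝ} (h : IsLocalMax f a)
    (hc : ContinuousAt f a) : deriv (deriv f) a ≤ 0 := by
  by_contra! hpos
  have hmin : IsLocalMin f a := isLocalMin_of_deriv_deriv_pos hpos h.deriv_eq_zero hc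
  have hconst : f =ᶠ[𝓝 a] fun _ => f a := by
    filter_upwards [h, hmin] with x hmax hmin using le_antisymm hmax hmin
  have : deriv (deriv f) a = 0 := by
    rw [hconst.deriv.deriv_eq]
    simp
  exact hpos.ne' this

section

variable {E : Type*} [NormedAddCommGroup E] [NormedSpace ℝ E]

theorem ContDiffAt.differentiableAt_fderiv_apply {f : E → ℝ} {p : E} (hf : ContDiffAt ℝ 2 f p)
    (d : E) : DifferentiableAt ℝ (fun q => fderiv ℝ f q d) p :=
  ((hf.fderiv_right (m := 1) (by norm_num)).differentiableAt one_ne_zero).clm_apply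
    (differentiableAt_const d)

theorem IsLocalMax.fderiv_fderiv_apply_nonpos {f : E → ℝ} {p : E} (h : IsLocalMax f p)
    (hf : ContDiffAt ℝ 2 f p) (d : E) : fderiv ℝ (fun q => fderiv ℝ f q d) p d ≤ 0 := by
  set line : ℝ → E := fun t => p + t • d
  have hline : ∀ t, HasDerivAt line d t := fun t => by
    simpa only [one_smul] using ((hasDerivAt_id' t).smul_const d).const_add p
  have hline0 : line 0 = p := by simp [line]
  have hline_tendsto : Tendsto line (𝓝 0) (𝓝 p) := by
    simpa [hline0] using (hline 0).continuousAt.tendsto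
  have hderiv : deriv (f ∘ line) =ᶠ[𝓝 0] fun t => fderiv ℝ f (line t) d := by
    filter_upwards [hline_tendsto.eventually (hf.eventually (by simp))] with t ht
    exact ((ht.differentiableAt (by simp)).hasFDerivAt.comp_hasDerivAt t (hline t)).deriv
  have hsecond : HasDerivAt (fun t => fderiv ℝ f (line t) d)
      (fderiv ℝ (fun q => fderiv ℝ f q d) p d) 0 := by
    have := (hf.differentiableAt_fderiv_apply d).hasFDerivAt
    rw [← hline0] at this ⊢
    exact this.comp_hasDerivAt 0 (hline 0)
  have hmax : IsLocalMax (f ∘ line) 0 := by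
    simpa [IsLocalMax, IsMaxFilter, hline0] using hline_tendsto.eventually h
  have hcont : ContinuousAt (f ∘ line) 0 :=
    (hf.continuousAt.comp_of_eq (hline 0).continuousAt hline0)
  simpa [(hsecond.congr_of_eventuallyEq hderiv).deriv] using hmax.deriv_deriv_nonpos hcont

theorem fderiv_fderiv_apply_add {f g : E → ℝ} {p : E} (hf : ContDiffAt ℝ 2 f p)
    (hg : ContDiffAt ℝ 2 g p) (d : E) :
    fderiv ℝ (fun q => fderiv ℝ (fun x => f x + g x) q d) p d =
      fderiv ℝ (fun q => fderiv ℝ f q d) p d + fderiv ℝ (fun q => fderiv ℝ g q d) p d := by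
  have hsum : (fun q => fderiv ℝ (fun x => f x + g x) q d) =ᶠ[𝓝 p]
      fun q => fderiv ℝ f q d + fderiv ℝ g q d := by
    filter_upwards [hf.eventually (by simp), hg.eventually (by simp)] with q hfq hgq
    rw [fderiv_fun_add (hfq.differentiableAt (by simp)) (hgq.differentiableAt (by simp))]
    rfl
  rw [hsum.fderiv_eq, fderiv_fun_add (hf.differentiableAt_fderiv_apply d)
    (hg.differentiableAt_fderiv_apply d)]
  rfl

end

def laplacian2 (f : ℝ × ℝ → ℝ) (q : ℝ × ℝ) : ℝ := pdx2 (pdx2 f) q + pdy2 (pdy2 f) q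

theorem IsLocalMax.laplacian2_nonpos {f : ℝ × ℝ → ℝ} {p : ℝ × ℝ} (h : IsLocalMax f p)
    (hf : ContDiffAt ℝ 2 f p) : laplacian2 f p ≤ 0 :=
  add_nonpos (h.fderiv_fderiv_apply_nonpos hf _) (h.fderiv_fderiv_apply_nonpos hf _)

theorem laplacian2_add {f g : ℝ × ℝ → ℝ} {p : ℝ × ℝ} (hf : ContDiffAt ℝ 2 f p)
    (hg : ContDiffAt ℝ 2 g p) :
    laplacian2 (fun x => f x + g x) p = laplacian2 f p + laplacian2 g p := by
  unfold laplacian2 pdx2 pdy2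
  rw [fderiv_fderiv_apply_add hf hg, fderiv_fderiv_apply_add hf hg]
  ring

theorem laplacian2_neg (f : ℝ × ℝ → ℝ) (p : ℝ × ℝ) :
    laplacian2 (-f) p = -laplacian2 f p := by
  unfold laplacian2 pdx2 pdy2
  simp only [fderiv_neg, fderiv_fun_neg, neg_apply, neg_add]

theorem laplacian2_quadratic (c : ℝ) (p : ℝ × ℝ) :
    laplacian2 (fun x => c * (2 * x.2 ^ 2 - x.1 ^ 2)) p = 2 * c := by
  have hP (x : ℝ × ℝ) := ((((hasFDerivAt_snd (𝕜 := ℝ) (p := x)).pow 2).const_mul 2).fun_sub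
    ((hasFDerivAt_fst (p := x)).pow 2)).const_mul c
  have hx : pdx2 (fun x : ℝ × ℝ => c * (2 * x.2 ^ 2 - x.1 ^ 2)) = fun x => -(2 * c) * x.1 := by
    ext x
    simp [pdx2, (hP x).fderiv]
    ring
  have hy : pdy2 (fun x : ℝ × ℝ => c * (2 * x.2 ^ 2 - x.1 ^ 2)) = fun x => (4 * c) * x.2 := by
    ext x
    simp [pdy2, (hP x).fderiv]
    ring
  rw [laplacian2, hx, hy, pdx2, pdy2,
    ((hasFDerivAt_fst (𝕜 := ℝ) (p := p)).const_mul (-(2 * c))).fderiv,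
    ((hasFDerivAt_snd (𝕜 := ℝ) (p := p)).const_mul (4 * c)).fderiv]
  simp
  ring

theorem IsCompact.forall_le_of_laplacian2_pos {K : Set (ℝ × ℝ)} (hK : IsCompact K)
    {v : ℝ × ℝ → ℝ} (hv : ContinuousOn v K) (hv₂ : ∀ p ∈ interior K, ContDiffAt ℝ 2 v p)
    (hΔv : ∀ p ∈ interior K, 0 < laplacian2 v p) {M : ℝ} (hM : ∀ p ∈ frontier K, v p ≤ M) :
    ∀ q ∈ K, v q ≤ M := by
  intro q hq
  obtain ⟨p, hpK, hpmax⟩ := hK.exists_isMaxOn ⟨q, hq⟩ hv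
  have hp : p ∉ interior K := fun hp =>
    (hΔv p hp).not_ge ((hpmax.isLocalMax (mem_interior_iff_mem_nhds.1 hp)).laplacian2_nonpos
      (hv₂ p hp))
  exact (hpmax hq).trans (hM p ⟨subset_closure hpK, hp⟩)

theorem exists_abs_le_and_le_mul_sq (x C : ℝ) {ε : ℝ} (hε : 0 < ε) :
    ∃ R, |x| ≤ R ∧ C ≤ ε * R ^ 2 := by
  set R := |x| + |C| / ε + 1
  have hCε : 0 ≤ |C| / ε := div_nonneg (abs_nonneg C) hε.le
  have hR : 1 ≤ R := by linarith [abs_nonneg x]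
  have hCR : C ≤ ε * R := by
    rw [mul_add, mul_add, mul_div_cancel₀ _ hε.ne']
    linarith [le_abs_self C, mul_nonneg hε.le (abs_nonneg x)]
  refine ⟨R, by linarith, ?_⟩
  nlinarith [mul_le_mul_of_nonneg_left hR (mul_nonneg hε.le (zero_le_one.trans hR))]

theorem le_mul_quadratic_of_harmonic_strip {a b C : ℝ} {w : ℝ × ℝ → ℝ}
    (hw : ContinuousOn w {q : ℝ × ℝ | a ≤ q.2 ∧ q.2 ≤ b})
    (hwC : ∀ q ∈ {q : ℝ × ℝ | a ≤ q.2 ∧ q.2 ≤ b}, w q ≤ C)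
    (hw₂ : ContDiffOn ℝ 2 w {q : ℝ × ℝ | a < q.2 ∧ q.2 < b})
    (hΔw : ∀ q ∈ {q : ℝ × ℝ | a < q.2 ∧ q.2 < b}, laplacian2 w q = 0)
    (hwa : ∀ x : ℝ, w (x, a) = 0) (hwb : ∀ x : ℝ, w (x, b) = 0)
    {ε : ℝ} (hε : 0 < ε) {q : ℝ × ℝ} (hq : a ≤ q.2 ∧ q.2 ≤ b) :
    w q ≤ ε * (q.1 ^ 2 + 2 * (a ^ 2 + b ^ 2)) := by
  obtain ⟨R, hqR, hCR⟩ := exists_abs_le_and_le_mul_sq q.1 C hε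
  set K := Icc (-R) R ×ˢ Icc a b
  set v : ℝ × ℝ → ℝ := fun x => w x + ε * (2 * x.2 ^ 2 - x.1 ^ 2)
  have hsq : ∀ z, a ≤ z → z ≤ b → z ^ 2 ≤ a ^ 2 + b ^ 2 := fun z hza hzb => by
    rcases le_total 0 z with hz | hz <;> nlinarith
  have hK : IsCompact K := isCompact_Icc.prod isCompact_Icc
  have hKU : interior K ⊆ {q : ℝ × ℝ | a < q.2 ∧ q.2 < b} := fun p hp => by
    rw [interior_prod_eq, interior_Icc, interior_Icc] at hp
    exact hp.2
  have hw₂K : ∀ p ∈ interior K, ContDiffAt ℝ 2 w p := fun p hp =>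
    hw₂.contDiffAt ((isOpen_Ioo.preimage continuous_snd).mem_nhds (hKU hp))
  have hvK : ∀ p ∈ K, v p ≤ ε * (2 * (a ^ 2 + b ^ 2)) := by
    refine hK.forall_le_of_laplacian2_pos ?_ (fun p hp => (hw₂K p hp).add (by fun_prop))
      (fun p hp => ?_) (fun p hp => ?_)
    · exact (hw.mono fun p hp => hp.2).add (by fun_prop)
    · rw [laplacian2_add (hw₂K p hp) (by fun_prop), hΔw p (hKU hp), laplacian2_quadratic]
      linarith
    · obtain ⟨x, z⟩ := p
      have hpK : (x, z) ∈ K := hK.isClosed.frontier_subset hp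
      have hz := hsq z hpK.2.1 hpK.2.2
      by_cases hzab : z = a ∨ z = b
      · have hw0 : w (x, z) = 0 := by rcases hzab with rfl | rfl <;> simp [hwa, hwb]
        simp only [hw0]
        nlinarith [sq_nonneg x]
      · have hz' : z ∈ Ioo a b := ⟨hpK.2.1.lt_of_ne (by tauto), hpK.2.2.lt_of_ne (by tauto)⟩
        have hx : x ∉ Ioo (-R) R := fun hx => hp.2 (by
          rw [interior_prod_eq, interior_Icc, interior_Icc]
          exact ⟨hx, hz'⟩)
        have hRx : R ^ 2 ≤ x ^ 2 := by
          rw [mem_Ioo, not_and_or, not_lt, not_lt] at hx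
          rcases hx with hx | hx <;> nlinarith [(abs_nonneg q.1).trans hqR]
        nlinarith [hwC (x, z) hpK.2]
  nlinarith [hvK q ⟨abs_le.1 hqR, hq⟩, sq_nonneg q.2]

theorem nonpos_of_harmonic_strip {a b C : ℝ} {w : ℝ × ℝ → ℝ}
    (hw : ContinuousOn w {q : ℝ × ℝ | a ≤ q.2 ∧ q.2 ≤ b})
    (hwC : ∀ q ∈ {q : ℝ × ℝ | a ≤ q.2 ∧ q.2 ≤ b}, w q ≤ C)
    (hw₂ : ContDiffOn ℝ 2 w {q : ℝ × ℝ | a < q.2 ∧ q.2 < b})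
    (hΔw : ∀ q ∈ {q : ℝ × ℝ | a < q.2 ∧ q.2 < b}, laplacian2 w q = 0)
    (hwa : ∀ x : ℝ, w (x, a) = 0) (hwb : ∀ x : ℝ, w (x, b) = 0) :
    ∀ q ∈ {q : ℝ × ℝ | a ≤ q.2 ∧ q.2 ≤ b}, w q ≤ 0 := by
  intro q hq
  have hlim : Tendsto (fun ε => ε * (q.1 ^ 2 + 2 * (a ^ 2 + b ^ 2))) (𝓝[>] 0) (𝓝 0) := by
    simpa using ((continuous_mul_const _).tendsto' 0 0 (zero_mul _)).mono_left nhdsWithin_le_nhds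
  exact ge_of_tendsto hlim (eventually_nhdsWithin_of_forall fun ε hε =>
    le_mul_quadratic_of_harmonic_strip hw hwC hw₂ hΔw hwa hwb hε hq)

theorem bounded_harmonic_strip_vanishing_general
    (h₁ h₂ : ℝ)
    (w : ℝ × ℝ → ℝ)
    (hw_cont : ContinuousOn w {q : ℝ × ℝ | -h₁ ≤ q.2 ∧ q.2 ≤ h₂})
    (hw_bdd : ∃ C : ℝ, ∀ q ∈ {q : ℝ × ℝ | -h₁ ≤ q.2 ∧ q.2 ≤ h₂}, |w q| ≤ C)
    (hw_C2 : ContDiffOn ℝ 2 w {q : ℝ × ℝ | -h₁ < q.2 ∧ q.2 < h₂})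
    (hw_harm : ∀ q ∈ {q : ℝ × ℝ | -h₁ < q.2 ∧ q.2 < h₂},
      pdx2 (pdx2 w) q + pdy2 (pdy2 w) q = 0)
    (hw_bot : ∀ x : ℝ, w (x, -h₁) = 0)
    (hw_top : ∀ x : ℝ, w (x, h₂) = 0) :
    ∀ q ∈ {q : ℝ × ℝ | -h₁ ≤ q.2 ∧ q.2 ≤ h₂}, w q = 0 := by
  obtain ⟨C, hC⟩ := hw_bdd
  intro q hq
  have hle := nonpos_of_harmonic_strip hw_cont (fun p hp => (abs_le.1 (hC p hp)).2) hw_C2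
    hw_harm hw_bot hw_top q hq
  have hge := nonpos_of_harmonic_strip hw_cont.neg (fun p hp => neg_le.1 (abs_le.1 (hC p hp)).1)
    hw_C2.neg (fun p hp => by rw [laplacian2_neg, laplacian2, hw_harm p hp, neg_zero])
    (fun x => by simp [hw_bot]) (fun x => by simp [hw_top]) q hq
  exact le_antisymm hle (neg_nonpos.1 hge)

/-- **Phragmén–Lindelöf / Liouville theorem on a strip.** A bounded continuous function
on the closed strip `ℝ × [-h₁, h₂]` that is harmonic in the open strip and vanishes on
both boundary lines vanishes identically. -/
theorem bounded_harmonic_strip_vanishing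
    (h₁ h₂ : ℝ) (hh₁ : 0 < h₁) (hh₂ : 0 < h₂)
    (w : ℝ × ℝ → ℝ)
    (hw_cont : ContinuousOn w {q : ℝ × ℝ | -h₁ ≤ q.2 ∧ q.2 ≤ h₂})
    (hw_bdd : ∃ C : ℝ, ∀ q ∈ {q : ℝ × ℝ | -h₁ ≤ q.2 ∧ q.2 ≤ h₂}, |w q| ≤ C)
    (hw_C2 : ContDiffOn ℝ 2 w {q : ℝ × ℝ | -h₁ < q.2 ∧ q.2 < h₂})
    (hw_harm : ∀ q ∈ {q : ℝ × ℝ | -h₁ < q.2 ∧ q.2 < h₂},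
      pdx2 (pdx2 w) q + pdy2 (pdy2 w) q = 0)
    (hw_bot : ∀ x : ℝ, w (x, -h₁) = 0)
    (hw_top : ∀ x : ℝ, w (x, h₂) = 0) :
    ∀ q ∈ {q : ℝ × ℝ | -h₁ ≤ q.2 ∧ q.2 ≤ h₂}, w q = 0 :=
  bounded_harmonic_strip_vanishing_general h₁ h₂ w hw_cont hw_bdd hw_C2 hw_harm hw_bot hw_top
end
end

section
/- Let h > 0, c ∈ (−h, ∞), ρ > 0, g ∈ ℝ, and β ∈ ℝ. Suppose u, w : ℝ × [−h, c) → ℝ are continuously differentiable, twice continuously differentiable in the open strip D = ℝ × (−h, c) (coordinates (x,z)), and P : D → ℝ is continuously differentiable, and that in D: ∂ₓu + ∂_z w = 0 (incompressibility), ∂_z u − ∂ₓw = β (constant vorticity), ρ(u ∂ₓu + w ∂_z u) = −∂ₓP, ρ(u ∂ₓw + w ∂_z w) = −∂_z P − ρg (steady Euler), and the pressure is hydrostatic: ∂ₓP ≡ 0 and ∂_z P ≡ −ρg. Suppose also the kinematic bed condition w(x, −h) = 0 for all x ∈ ℝ. Then the flow is a shear flow: w ≡ 0 on D and there is a constant k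 such that u(x,z) = βz + k for all (x,z) ∈ D. -/
/-!
With hydrostatic pressure the momentum equations say that `u` and `w` are transported by the flow.
Eliminating the `z`-derivatives by incompressibility and the vorticity gives, wherever
`u² + w² ≠ 0`, the identity `uₓ² + (wₓ + β/2)² = β²/4`, which extends to all of the strip by
continuity (where the velocity vanishes on an open set its derivatives vanish too).
Now `u - i w - (iβ/2) z̄` is holomorphic with derivative `uₓ - i (wₓ + β/2)`, of constant modulus
`|β|/2`, so by the maximum modulus principle `uₓ = a` and `wₓ = b` are constant.
Then `w` is affine, and `w = 0` on the bed forces `b = 0` and `w = -a (z + h)`;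
the transport of `w` then reads `a² (z + h) = 0`, so `a = 0`, `w ≡ 0` and `u = βz + k`.
-/

noncomputable section

open Complex ComplexConjugate Set Filter Topology

lemma fderiv_eq_of_pdx2_pdy2 {f : ℝ × ℝ → ℝ} {q : ℝ × ℝ} {A B : ℝ}
    (hx : pdx2 f q = A) (hy : pdy2 f q = B) :
    fderiv ℝ f q = A • ContinuousLinearMap.fst ℝ ℝ ℝ + B • ContinuousLinearMap.snd ℝ ℝ ℝ := by
  refine ContinuousLinearMap.prod_ext (ContinuousLinearMap.ext_ring ?_)
    (ContinuousLinearMap.ext_ring ?_)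
  · simpa [pdx2] using hx
  · simpa [pdy2] using hy

lemma IsOpen.exists_eq_affine_of_pdx2_pdy2 {s : Set (ℝ × ℝ)} (hs : IsOpen s)
    (hs' : IsPreconnected s) {f : ℝ × ℝ → ℝ} (hf : DifferentiableOn ℝ f s) {A B : ℝ}
    (hx : ∀ q ∈ s, pdx2 f q = A) (hy : ∀ q ∈ s, pdy2 f q = B) :
    ∃ k, ∀ q ∈ s, f q = A * q.1 + B * q.2 + k := by
  refine hs.exists_eq_add_of_fderiv_eq hs' hf (g := fun q => A * q.1 + B * q.2) (by fun_prop) ?_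
  intro q hq
  rw [fderiv_eq_of_pdx2_pdy2 (hx q hq) (hy q hq)]
  exact ((hasFDerivAt_fst.const_mul A).add (hasFDerivAt_snd.const_mul B)).fderiv.symm

lemma IsOpen.forall_eq_of_ne_zero_of_eventuallyEq_zero {X Y E : Type*} [TopologicalSpace X]
    [TopologicalSpace Y] [T1Space Y] [Zero E] {s : Set X} (hs : IsOpen s) {φ : X → Y} {y : Y}
    (hφ : ContinuousOn φ s) {f : X → E} (hne : ∀ x ∈ s, f x ≠ 0 → φ x = y)
    (hzero : ∀ x ∈ s, f =ᶠ[𝓝 x] 0 → φ x = y) : ∀ x ∈ s, φ x = y := by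
  intro x hx
  by_contra hxy
  refine hxy (hzero x hx ?_)
  filter_upwards [hs.mem_nhds hx, (hφ.continuousAt (hs.mem_nhds hx)).eventually_ne hxy]
    with z hz hzy
  by_contra hfz
  exact hzy (hne z hz hfz)

def complexVelocity (u w : ℝ × ℝ → ℝ) (ζ : ℂ) : ℂ := u (ζ.re, ζ.im) - I * w (ζ.re, ζ.im)

/-- Subtracting `(iβ/2) z̄`, whose curl is `β`, leaves a divergence- and curl-free field, for which
the Cauchy–Riemann equations hold. -/
lemma hasDerivAt_complexVelocity_sub_conj {u w : ℝ × ℝ → ℝ} {β : ℝ} {z : ℂ}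
    (hu : DifferentiableAt ℝ u (z.re, z.im)) (hw : DifferentiableAt ℝ w (z.re, z.im))
    (hdiv : pdx2 u (z.re, z.im) + pdy2 w (z.re, z.im) = 0)
    (hvort : pdy2 u (z.re, z.im) - pdx2 w (z.re, z.im) = β) :
    HasDerivAt (fun ζ => complexVelocity u w ζ - I * β / 2 * conj ζ)
      (pdx2 u (z.re, z.im) - I * (pdx2 w (z.re, z.im) + β / 2)) z := by
  have he : HasFDerivAt (fun ζ : ℂ => (ζ.re, ζ.im)) (equivRealProdCLM : ℂ →L[ℝ] ℝ × ℝ) z :=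
    equivRealProdCLM.hasFDerivAt
  have hF := ((ofRealCLM.hasFDerivAt.comp z (hu.hasFDerivAt.comp z he)).sub
    ((ofRealCLM.hasFDerivAt.comp z (hw.hasFDerivAt.comp z he)).const_mul I)).sub
    (((conjCLE : ℂ →L[ℝ] ℂ).hasFDerivAt (x := z)).const_mul (I * β / 2))
  rw [hasDerivAt_iff_hasFDerivAt]
  refine hasFDerivAt_of_restrictScalars ℝ hF ?_
  rw [fderiv_eq_of_pdx2_pdy2 rfl rfl, fderiv_eq_of_pdx2_pdy2 rfl rfl]
  ext v
  simp only [ContinuousLinearMap.coe_restrictScalars', ContinuousLinearMap.toSpanSingleton_apply,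
    smul_eq_mul, ContinuousLinearMap.add_comp, ContinuousLinearMap.smul_comp,
    ContinuousLinearMap.comp_add, ContinuousLinearMap.comp_smulₛₗ, Real.ringHom_apply, smul_add,
    sub_apply, add_apply, smul_apply, ContinuousLinearMap.comp_apply, ContinuousLinearEquiv.coe_coe,
    equivRealProdCLM_apply, ContinuousLinearMap.coe_fst', ContinuousLinearMap.coe_snd',
    ofRealCLM_apply, real_smul, ContinuousAlgEquiv.coeCLE_apply, conjCAE_apply]
  rw [show pdy2 u (z.re, z.im) = pdx2 w (z.re, z.im) + β by linarith,
    show pdy2 w (z.re, z.im) = -pdx2 u (z.re, z.im) by linarith]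
  apply Complex.ext <;> simp <;> ring

/-- The two equations give `(u² + w²) uₓ = -β u w` and `(u² + w²) wₓ = -β w²`. -/
lemma sq_add_sq_add_mul_eq_zero_of_advection {u w ux wx β : ℝ}
    (hadv : u * ux + w * wx + β * w = 0) (hrot : u * wx - w * ux = 0) (hs : u ^ 2 + w ^ 2 ≠ 0) :
    ux ^ 2 + wx ^ 2 + β * wx = 0 := by
  have hA : (u ^ 2 + w ^ 2) * ux + β * u * w = 0 := by linear_combination u * hadv - w * hrot
  have hB : (u ^ 2 + w ^ 2) * wx + β * w ^ 2 = 0 := by linear_combination w * hadv + u * hrot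
  refine (mul_eq_zero.mp ?_).resolve_left (pow_ne_zero 2 hs)
  linear_combination ((u ^ 2 + w ^ 2) * ux - β * u * w) * hA
    + ((u ^ 2 + w ^ 2) * wx - β * w ^ 2 + β * (u ^ 2 + w ^ 2)) * hB

section

variable {s : Set (ℝ × ℝ)} {u w : ℝ × ℝ → ℝ} {β : ℝ}

lemma IsOpen.pdx2_sq_add_sq_add_mul_eq_zero (hs : IsOpen s) (hu : ContDiffOn ℝ 1 u s)
    (hw : ContDiffOn ℝ 1 w s)
    (hadv : ∀ q ∈ s, u q * pdx2 u q + w q * pdx2 w q + β * w q = 0)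
    (hrot : ∀ q ∈ s, u q * pdx2 w q - w q * pdx2 u q = 0) :
    ∀ q ∈ s, pdx2 u q ^ 2 + pdx2 w q ^ 2 + β * pdx2 w q = 0 := by
  have hux : ContinuousOn (pdx2 u) s :=
    (hu.continuousOn_fderiv_of_isOpen hs le_rfl).clm_apply continuousOn_const
  have hwx : ContinuousOn (pdx2 w) s :=
    (hw.continuousOn_fderiv_of_isOpen hs le_rfl).clm_apply continuousOn_const
  refine hs.forall_eq_of_ne_zero_of_eventuallyEq_zero (f := fun q => (u q, w q))
    (((hux.pow 2).add (hwx.pow 2)).add (continuousOn_const.mul hwx))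
    (fun q hq hne => ?_) (fun q _ h0 => ?_)
  · refine sq_add_sq_add_mul_eq_zero_of_advection (hadv q hq) (hrot q hq) fun h0 => hne ?_
    exact Prod.ext (pow_eq_zero_iff two_ne_zero |>.mp (by nlinarith))
      (pow_eq_zero_iff two_ne_zero |>.mp (by nlinarith))
  · have hu0 : u =ᶠ[𝓝 q] 0 := h0.mono fun _ h => congrArg Prod.fst h
    have hw0 : w =ᶠ[𝓝 q] 0 := h0.mono fun _ h => congrArg Prod.snd h
    simp [pdx2, hu0.fderiv_eq, hw0.fderiv_eq]

lemma exists_pdx2_eq_of_sq_add_sq_add_mul_eq_zero (hs : IsOpen s) (hs' : IsPreconnected s)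
    (hu : DifferentiableOn ℝ u s) (hw : DifferentiableOn ℝ w s)
    (hdiv : ∀ q ∈ s, pdx2 u q + pdy2 w q = 0) (hvort : ∀ q ∈ s, pdy2 u q - pdx2 w q = β)
    (hφ : ∀ q ∈ s, pdx2 u q ^ 2 + pdx2 w q ^ 2 + β * pdx2 w q = 0) :
    ∃ a b, ∀ q ∈ s, pdx2 u q = a ∧ pdx2 w q = b := by
  rcases s.eq_empty_or_nonempty with rfl | ⟨q₀, hq₀⟩
  · simp
  set Ω : Set ℂ := {ζ | (ζ.re, ζ.im) ∈ s}
  have hΩ : IsOpen Ω := hs.preimage (by fun_prop)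
  have hΩ' : IsPreconnected Ω := equivRealProdCLM.toHomeomorph.isPreconnected_preimage.2 hs'
  set κ : ℂ → ℂ := fun ζ => pdx2 u (ζ.re, ζ.im) - I * (pdx2 w (ζ.re, ζ.im) + β / 2)
  set F : ℂ → ℂ := fun ζ => complexVelocity u w ζ - I * β / 2 * conj ζ
  have hF : ∀ ζ ∈ Ω, HasDerivAt F (κ ζ) ζ :=
    fun ζ hζ => hasDerivAt_complexVelocity_sub_conj (hu.differentiableAt (hs.mem_nhds hζ))
      (hw.differentiableAt (hs.mem_nhds hζ)) (hdiv _ hζ) (hvort _ hζ)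
  have hFd : DifferentiableOn ℂ F Ω := fun ζ hζ => (hF ζ hζ).differentiableAt.differentiableWithinAt
  have hκ : DifferentiableOn ℂ κ Ω :=
    (hFd.analyticOnNhd hΩ).deriv.differentiableOn.congr fun ζ hζ => (hF ζ hζ).deriv.symm
  have hnorm : ∀ ζ ∈ Ω, ‖κ ζ‖ = |β| / 2 := by
    intro ζ hζ
    rw [norm_def, ← Real.sqrt_sq (by positivity : 0 ≤ |β| / 2), div_pow, sq_abs]
    congr 1
    simp [κ, normSq_apply]
    linear_combination hφ _ hζ
  have hζ₀ : (⟨q₀.1, q₀.2⟩ : ℂ) ∈ Ω := hq₀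
  have hconst := eqOn_of_isPreconnected_of_isMaxOn_norm hΩ' hΩ hκ hζ₀
    fun ζ hζ => by simp [hnorm ζ hζ, hnorm _ hζ₀]
  refine ⟨pdx2 u q₀, pdx2 w q₀, fun q hq => ?_⟩
  have h := hconst (show (⟨q.1, q.2⟩ : ℂ) ∈ Ω from hq)
  have hre := congrArg re h
  have him := congrArg im h
  simp [κ] at hre him
  exact ⟨hre, him⟩

end

lemma eq_zero_of_affine_of_eq_zero_on_bed {a c A B k : ℝ} (hac : a < c) {f : ℝ × ℝ → ℝ}
    (hf : ContinuousOn f {q | a ≤ q.2 ∧ q.2 < c}) (hbed : ∀ x, f (x, a) = 0)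
    (haff : ∀ q ∈ {q : ℝ × ℝ | a < q.2 ∧ q.2 < c}, f q = A * q.1 + B * q.2 + k) :
    A = 0 ∧ B * a + k = 0 := by
  have hcl : {q : ℝ × ℝ | a ≤ q.2 ∧ q.2 < c} ⊆ closure {q | a < q.2 ∧ q.2 < c} := by
    rw [show {q : ℝ × ℝ | a < q.2 ∧ q.2 < c} = Prod.snd ⁻¹' Ioo a c from rfl,
      ← isOpenMap_snd.preimage_closure_eq_closure_preimage continuous_snd, closure_Ioo hac.ne]
    exact fun q hq => ⟨hq.1, hq.2.le⟩
  have heq := Set.EqOn.of_subset_closure haff hf (by fun_prop) (fun q hq => ⟨hq.1.le, hq.2⟩) hcl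
  have h0 := heq (show ((0 : ℝ), a) ∈ _ from ⟨le_rfl, hac⟩)
  have h1 := heq (show ((1 : ℝ), a) ∈ _ from ⟨le_rfl, hac⟩)
  rw [hbed] at h0 h1
  constructor <;> linarith

theorem hydrostatic_implies_shear_general
    (h c ρ g β : ℝ) (hc : -h < c) (hρ : 0 < ρ)
    (u w P : ℝ × ℝ → ℝ)
    (hu_C1 : ContDiffOn ℝ 1 u {q : ℝ × ℝ | -h ≤ q.2 ∧ q.2 < c})
    (hw_C1 : ContDiffOn ℝ 1 w {q : ℝ × ℝ | -h ≤ q.2 ∧ q.2 < c})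
    (hincomp : ∀ q ∈ {q : ℝ × ℝ | -h < q.2 ∧ q.2 < c}, pdx2 u q + pdy2 w q = 0)
    (hvort : ∀ q ∈ {q : ℝ × ℝ | -h < q.2 ∧ q.2 < c}, pdy2 u q - pdx2 w q = β)
    (hmomx : ∀ q ∈ {q : ℝ × ℝ | -h < q.2 ∧ q.2 < c},
      ρ * (u q * pdx2 u q + w q * pdy2 u q) = -(pdx2 P q))
    (hmomz : ∀ q ∈ {q : ℝ × ℝ | -h < q.2 ∧ q.2 < c},
      ρ * (u q * pdx2 w q + w q * pdy2 w q) = -(pdy2 P q) - ρ * g)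
    (hPx : ∀ q ∈ {q : ℝ × ℝ | -h < q.2 ∧ q.2 < c}, pdx2 P q = 0)
    (hPz : ∀ q ∈ {q : ℝ × ℝ | -h < q.2 ∧ q.2 < c}, pdy2 P q = -(ρ * g))
    (hbed : ∀ x : ℝ, w (x, -h) = 0) :
    (∀ q ∈ {q : ℝ × ℝ | -h < q.2 ∧ q.2 < c}, w q = 0) ∧
    (∃ k : ℝ, ∀ q ∈ {q : ℝ × ℝ | -h < q.2 ∧ q.2 < c}, u q = β * q.2 + k) := by
  set D : Set (ℝ × ℝ) := {q | -h < q.2 ∧ q.2 < c}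
  have hD : IsOpen D := isOpen_Ioo.preimage continuous_snd
  have hD' : IsPreconnected D :=
    ((convex_Ioo (-h) c).linear_preimage (LinearMap.snd ℝ ℝ ℝ)).isPreconnected
  have hu : ContDiffOn ℝ 1 u D := hu_C1.mono fun q hq => ⟨hq.1.le, hq.2⟩
  have hw : ContDiffOn ℝ 1 w D := hw_C1.mono fun q hq => ⟨hq.1.le, hq.2⟩
  have hadv : ∀ q ∈ D, u q * pdx2 u q + w q * pdx2 w q + β * w q = 0 := fun q hq => by
    have := hmomx q hq
    rw [hPx q hq, neg_zero] at this
    linear_combination (mul_eq_zero.mp this).resolve_left hρ.ne' - w q * hvort q hq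
  have hrot : ∀ q ∈ D, u q * pdx2 w q - w q * pdx2 u q = 0 := fun q hq => by
    have := hmomz q hq
    rw [hPz q hq, neg_neg, sub_self] at this
    linear_combination (mul_eq_zero.mp this).resolve_left hρ.ne' - w q * hincomp q hq
  obtain ⟨a, b, hab⟩ := exists_pdx2_eq_of_sq_add_sq_add_mul_eq_zero hD hD'
    (hu.differentiableOn one_ne_zero) (hw.differentiableOn one_ne_zero) hincomp hvort
    (hD.pdx2_sq_add_sq_add_mul_eq_zero hu hw hadv hrot)
  obtain ⟨k, hwk⟩ := hD.exists_eq_affine_of_pdx2_pdy2 hD' (hw.differentiableOn one_ne_zero)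
    (fun q hq => (hab q hq).2) (B := -a) fun q hq => by linarith [hincomp q hq, (hab q hq).1]
  obtain ⟨rfl, hk⟩ := eq_zero_of_affine_of_eq_zero_on_bed (by linarith) hw_C1.continuousOn hbed hwk
  -- now `w = -a (z + h)`, and the transport of `w` gives `a² (z + h) = 0`
  obtain rfl : a = 0 := by
    have hq₀ : ((0 : ℝ), (c - h) / 2) ∈ D := ⟨by linarith, by linarith⟩
    have h₀ := hrot _ hq₀
    rw [(hab _ hq₀).1, (hab _ hq₀).2, hwk _ hq₀] at h₀
    refine pow_eq_zero_iff two_ne_zero |>.mp <|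
      (mul_eq_zero.mp ?_).resolve_right (by linarith : (c + h) / 2 ≠ 0)
    linear_combination h₀ + a * hk
  refine ⟨fun q hq => by rw [hwk q hq]; linarith, ?_⟩
  obtain ⟨k', hk'⟩ := hD.exists_eq_affine_of_pdx2_pdy2 hD' (hu.differentiableOn one_ne_zero)
    (fun q hq => (hab q hq).1) (B := β) fun q hq => by linarith [hvort q hq, (hab q hq).2]
  exact ⟨k', fun q hq => by rw [hk' q hq]; ring⟩

/-- **Hydrostatic pressure forces shear flow.** Let `(u, w, P)` be a planar steady Euler
flow with constant vorticity `β` in the strip `D = ℝ × (-h, c)`, `C¹` up to the flat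
bed `{z = -h}`, satisfying `w = 0` on the bed. If the pressure is hydrostatic
(`∂ₓP ≡ 0`, `∂_zP ≡ -ρg`), then `w ≡ 0` in `D` and `u(x,z) = βz + k` for some
constant `k`. -/
theorem hydrostatic_implies_shear
    (h c ρ g β : ℝ) (hh : 0 < h) (hc : -h < c) (hρ : 0 < ρ)
    (u w P : ℝ × ℝ → ℝ)
    (hu_C1 : ContDiffOn ℝ 1 u {q : ℝ × ℝ | -h ≤ q.2 ∧ q.2 < c})
    (hw_C1 : ContDiffOn ℝ 1 w {q : ℝ × ℝ | -h ≤ q.2 ∧ q.2 < c})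
    (hu_C2 : ContDiffOn ℝ 2 u {q : ℝ × ℝ | -h < q.2 ∧ q.2 < c})
    (hw_C2 : ContDiffOn ℝ 2 w {q : ℝ × ℝ | -h < q.2 ∧ q.2 < c})
    (hP_C1 : ContDiffOn ℝ 1 P {q : ℝ × ℝ | -h < q.2 ∧ q.2 < c})
    (hincomp : ∀ q ∈ {q : ℝ × ℝ | -h < q.2 ∧ q.2 < c}, pdx2 u q + pdy2 w q = 0)
    (hvort : ∀ q ∈ {q : ℝ × ℝ | -h < q.2 ∧ q.2 < c}, pdy2 u q - pdx2 w q = β)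
    (hmomx : ∀ q ∈ {q : ℝ × ℝ | -h < q.2 ∧ q.2 < c},
      ρ * (u q * pdx2 u q + w q * pdy2 u q) = -(pdx2 P q))
    (hmomz : ∀ q ∈ {q : ℝ × ℝ | -h < q.2 ∧ q.2 < c},
      ρ * (u q * pdx2 w q + w q * pdy2 w q) = -(pdy2 P q) - ρ * g)
    (hPx : ∀ q ∈ {q : ℝ × ℝ | -h < q.2 ∧ q.2 < c}, pdx2 P q = 0)
    (hPz : ∀ q ∈ {q : ℝ × ℝ | -h < q.2 ∧ q.2 < c}, pdy2 P q = -(ρ * g))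
    (hbed : ∀ x : ℝ, w (x, -h) = 0) :
    (∀ q ∈ {q : ℝ × ℝ | -h < q.2 ∧ q.2 < c}, w q = 0) ∧
    (∃ k : ℝ, ∀ q ∈ {q : ℝ × ℝ | -h < q.2 ∧ q.2 < c}, u q = β * q.2 + k) :=
  hydrostatic_implies_shear_general h c ρ g β hc hρ u w P hu_C1 hw_C1 hincomp hvort hmomx hmomz hPx
    hPz hbed
end
end

section
/- Let ζ ∈ C¹(ℝ²;ℝ) satisfy the inviscid Burgers equation ζ(x,y) ∂ₓζ(x,y) + ∂ᵧζ(x,y) = 0 at every point (x,y) ∈ ℝ². Then ζ is constant. Consequently, if β ≠ 0, V ≠ 0, k ∈ ℝ and η ∈ C¹(ℝ²;ℝ) satisfies (β η + k) ∂ₓη + V ∂ᵧη = 0 on all of ℝ², then η is constant. -/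
noncomputable section

/-!
Along the characteristic line `s ↦ (q.1 + ζ q * s, q.2 + s)` the function `g = ζ - ζ q`
satisfies the linear equation `g' = -ζ_x · g` with `g(0) = 0`, so `g ≡ 0`: `ζ` is constant on the
line through `q` of slope `ζ q`. Characteristics through two points where `ζ` takes different
values are non-parallel, hence meet, which is absurd. The equation for `η` becomes Burgers'
equation for `ζ(x, y) = β η(x, V y) + k`.
-/

theorem eq_zero_of_hasDerivAt_mul_self {a g : ℝ → ℝ} (ha : Continuous a)
    (hg : ∀ s, HasDerivAt g (a s * g s) s) {s₀ : ℝ} (hs₀ : g s₀ = 0) (s : ℝ) : g s = 0 := by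
  have hA : ∀ s, HasDerivAt (fun s => ∫ x in s₀..s, a x) (a s) s := fun s =>
    (ha.integral_hasStrictDerivAt s₀ s).hasDerivAt
  have hF : ∀ s, HasDerivAt (fun s => g s * Real.exp (-∫ x in s₀..s, a x)) 0 s := by
    intro s
    refine ((hg s).mul (hA s).neg.exp).congr_deriv ?_
    ring
  have hconst := is_const_of_deriv_eq_zero (fun s => (hF s).differentiableAt)
    (fun s => (hF s).deriv) s s₀
  simpa [hs₀] using hconst

theorem fderiv_apply_eq_pdx2_pdy2 (f : ℝ × ℝ → ℝ) (q v : ℝ × ℝ) :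
    fderiv ℝ f q v = v.1 * pdx2 f q + v.2 * pdy2 f q := by
  obtain ⟨x, y⟩ := v
  calc fderiv ℝ f q (x, y)
      = fderiv ℝ f q (x • ((1 : ℝ), (0 : ℝ)) + y • ((0 : ℝ), (1 : ℝ))) := by simp
    _ = x * pdx2 f q + y * pdy2 f q := by rw [map_add, map_smul, map_smul]; rfl

theorem ContDiff.continuous_pdx2 {f : ℝ × ℝ → ℝ} (hf : ContDiff ℝ 1 f) : Continuous (pdx2 f) :=
  (hf.continuous_fderiv one_ne_zero).clm_apply continuous_const

section Burgers

variable {ζ : ℝ × ℝ → ℝ} (hζ : ContDiff ℝ 1 ζ) (hB : ∀ q, ζ q * pdx2 ζ q + pdy2 ζ q = 0)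
include hζ hB

theorem burgers_apply_characteristic (q : ℝ × ℝ) (s : ℝ) :
    ζ (q.1 + ζ q * s, q.2 + s) = ζ q := by
  set c := ζ q
  set p : ℝ → ℝ × ℝ := fun s => (q.1 + c * s, q.2 + s)
  have hp : ∀ s, HasDerivAt p (c, 1) s := fun s => by
    simpa using (((hasDerivAt_id s).const_mul c).const_add q.1).prodMk
      ((hasDerivAt_id s).const_add q.2)
  have hg : ∀ s, HasDerivAt (fun s => ζ (p s) - c) (-pdx2 ζ (p s) * (ζ (p s) - c)) s := by
    intro s
    refine (((hζ.differentiable one_ne_zero (p s)).hasFDerivAt.comp_hasDerivAt s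
      (hp s)).sub_const c).congr_deriv ?_
    rw [fderiv_apply_eq_pdx2_pdy2]
    linear_combination hB (p s)
  have ha : Continuous fun s => -pdx2 ζ (p s) := (hζ.continuous_pdx2.comp (by fun_prop)).neg
  exact sub_eq_zero.mp (eq_zero_of_hasDerivAt_mul_self ha hg (s₀ := 0) (by simp [p, c]) s)

theorem burgers_eq_const (q q' : ℝ × ℝ) : ζ q = ζ q' := by
  by_contra hne
  have hcc : ζ q - ζ q' ≠ 0 := sub_ne_zero.mpr hne
  set t := (q'.1 - q.1 + ζ q' * (q.2 - q'.2)) / (ζ q - ζ q')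
  have hmeet : (q.1 + ζ q * t, q.2 + t) =
      (q'.1 + ζ q' * (q.2 - q'.2 + t), q'.2 + (q.2 - q'.2 + t)) := by
    have ht : t * (ζ q - ζ q') = q'.1 - q.1 + ζ q' * (q.2 - q'.2) := div_mul_cancel₀ _ hcc
    ext <;> dsimp only <;> linarith
  have h := burgers_apply_characteristic hζ hB q t
  rw [hmeet, burgers_apply_characteristic hζ hB q'] at h
  exact hne h.symm

end Burgers

def affineRescale (β V k : ℝ) (η : ℝ × ℝ → ℝ) (p : ℝ × ℝ) : ℝ := β * η (p.1, V * p.2) + k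

section Rescale

variable {β V k : ℝ} {η : ℝ × ℝ → ℝ}

theorem ContDiff.affineRescale (hη : ContDiff ℝ 1 η) : ContDiff ℝ 1 (affineRescale β V k η) := by
  unfold _root_.affineRescale
  fun_prop

theorem burgers_affineRescale (hη : ContDiff ℝ 1 η)
    (hE : ∀ q, (β * η q + k) * pdx2 η q + V * pdy2 η q = 0) (p : ℝ × ℝ) :
    affineRescale β V k η p * pdx2 (affineRescale β V k η) p +
      pdy2 (affineRescale β V k η) p = 0 := by
  set L : ℝ × ℝ →L[ℝ] ℝ × ℝ :=
    (ContinuousLinearMap.id ℝ ℝ).prodMap (V • ContinuousLinearMap.id ℝ ℝ)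
  have hL : ∀ w, L w = (w.1, V * w.2) := fun w => rfl
  have hd : HasFDerivAt (affineRescale β V k η) (β • (fderiv ℝ η (L p)).comp L) p :=
    (((hη.differentiable one_ne_zero (L p)).hasFDerivAt.comp p L.hasFDerivAt).const_mul
      β).add_const k
  have hdir := fderiv_apply_eq_pdx2_pdy2 (affineRescale β V k η) p (affineRescale β V k η p, 1)
  simp only [one_mul] at hdir
  rw [← hdir, hd.fderiv]
  simp [hL, fderiv_apply_eq_pdx2_pdy2, affineRescale, hE]

end Rescale

/-- **Global classical solutions of Burgers' equation are constant.** If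
`ζ ∈ C¹(ℝ²)` satisfies `ζ ζ_x + ζ_y = 0` everywhere, then `ζ` is constant.
Consequently, if `β ≠ 0`, `V ≠ 0` and `η ∈ C¹(ℝ²)` satisfies
`(β η + k) η_x + V η_y = 0` on all of `ℝ²`, then `η` is constant. -/
theorem burgers_global_constant :
    (∀ ζ : ℝ × ℝ → ℝ, ContDiff ℝ 1 ζ →
      (∀ q : ℝ × ℝ, ζ q * pdx2 ζ q + pdy2 ζ q = 0) →
      ∀ q q' : ℝ × ℝ, ζ q = ζ q') ∧
    (∀ β V k : ℝ, β ≠ 0 → V ≠ 0 → ∀ η : ℝ × ℝ → ℝ, ContDiff ℝ 1 η →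
      (∀ q : ℝ × ℝ, (β * η q + k) * pdx2 η q + V * pdy2 η q = 0) →
      ∀ q q' : ℝ × ℝ, η q = η q') := by
  refine ⟨fun ζ hζ hB => burgers_eq_const hζ hB, ?_⟩
  intro β V k hβ hV η hη hE q q'
  have h := burgers_eq_const hη.affineRescale (burgers_affineRescale hη hE)
    (q.1, q.2 / V) (q'.1, q'.2 / V)
  simp only [affineRescale, mul_div_cancel₀ _ hV] at h
  exact mul_left_cancel₀ hβ (add_right_cancel h)

end
end

section
/- Let h₂ ∈ ℝ and let η : ℝ² → ℝ be continuous with sup η < h₂, and set Ω₂ = {(x,y,z) ∈ ℝ³ : η(x,y) < z < h₂}. Suppose P : Ω₂ → ℝ is real-analytic on Ω₂ and satisfies ∂ᵧP ≡ 0 in Ω₂. Then P is independent of y: P(x, y₁, z) = P(x, y₂, z) whenever both (x, y₁, z) and (x, y₂, z) belong to Ω₂. -/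
/-!
Above the slab `sup η < z < h₂` every line in the `y`-direction lies in `Ω₂`, so there
`∂ᵧP = 0` makes `P` constant in `y`. For fixed `x, y₁, y₂`, the functions
`z ↦ P(x, y₁, z)` and `z ↦ P(x, y₂, z)` are real analytic on the interval
`max (η(x, y₁)) (η(x, y₂)) < z < h₂` and agree on its top part, hence on all of it
by the identity theorem.
-/

noncomputable section

open Set

theorem hasDerivAt_pdy {P : ℝ × ℝ × ℝ → ℝ} {x y z : ℝ}
    (hP : DifferentiableAt ℝ P (x, y, z)) :
    HasDerivAt (fun y ↦ P (x, y, z)) (pdy P (x, y, z)) y := by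
  have hline : HasDerivAt (fun y : ℝ ↦ (x, y, z)) ((0 : ℝ), (1 : ℝ), (0 : ℝ)) y :=
    (hasDerivAt_const y x).prodMk ((hasDerivAt_id y).prodMk (hasDerivAt_const y z))
  exact hP.hasFDerivAt.comp_hasDerivAt y hline

theorem eq_of_pdy_eq_zero {P : ℝ × ℝ × ℝ → ℝ} {x z : ℝ}
    (hP : ∀ y, DifferentiableAt ℝ P (x, y, z)) (hPy : ∀ y, pdy P (x, y, z) = 0) (y₁ y₂ : ℝ) :
    P (x, y₁, z) = P (x, y₂, z) := by
  have hderiv (y : ℝ) : HasDerivAt (fun y ↦ P (x, y, z)) 0 y :=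
    hPy y ▸ hasDerivAt_pdy (hP y)
  exact is_const_of_deriv_eq_zero (fun y ↦ (hderiv y).differentiableAt)
    (fun y ↦ (hderiv y).deriv) y₁ y₂

theorem AnalyticAt.comp_lineZ {P : ℝ × ℝ × ℝ → ℝ} {x y z : ℝ}
    (hP : AnalyticAt ℝ P (x, y, z)) : AnalyticAt ℝ (fun z ↦ P (x, y, z)) z :=
  hP.comp (f := fun z : ℝ ↦ (x, y, z))
    (analyticAt_const.prod (analyticAt_const.prod analyticAt_id))

theorem AnalyticOnNhd.eqOn_Ioo_of_eqOn_Ioo {E : Type*} [NormedAddCommGroup E]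
    [NormedSpace ℝ E] {f g : ℝ → E} {a b c : ℝ} (hf : AnalyticOnNhd ℝ f (Ioo a c))
    (hg : AnalyticOnNhd ℝ g (Ioo a c)) (hab : a ≤ b) (hbc : b < c) (hfg : EqOn f g (Ioo b c)) :
    EqOn f g (Ioo a c) := by
  obtain ⟨t, hbt, htc⟩ := exists_between hbc
  refine hf.eqOn_of_preconnected_of_eventuallyEq hg isPreconnected_Ioo
    ⟨hab.trans_lt hbt, htc⟩ ?_
  filter_upwards [Ioo_mem_nhds hbt htc] using hfg

theorem analytic_pressure_y_independent_general
    (h₂ : ℝ) (η : ℝ × ℝ → ℝ)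
    (hsup : ∃ b : ℝ, b < h₂ ∧ ∀ q : ℝ × ℝ, η q ≤ b)
    (P : ℝ × ℝ × ℝ → ℝ)
    (hP : AnalyticOnNhd ℝ P {p : ℝ × ℝ × ℝ | η (p.1, p.2.1) < p.2.2 ∧ p.2.2 < h₂})
    (hPy : ∀ p ∈ {p : ℝ × ℝ × ℝ | η (p.1, p.2.1) < p.2.2 ∧ p.2.2 < h₂}, pdy P p = 0) :
    ∀ x y₁ y₂ z : ℝ,
      (x, y₁, z) ∈ {p : ℝ × ℝ × ℝ | η (p.1, p.2.1) < p.2.2 ∧ p.2.2 < h₂} →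
      (x, y₂, z) ∈ {p : ℝ × ℝ × ℝ | η (p.1, p.2.1) < p.2.2 ∧ p.2.2 < h₂} →
      P (x, y₁, z) = P (x, y₂, z) := by
  obtain ⟨b, hbh₂, hηb⟩ := hsup
  intro x y₁ y₂ z hz₁ hz₂
  have hline (y : ℝ) : AnalyticOnNhd ℝ (fun z ↦ P (x, y, z)) (Ioo (η (x, y)) h₂) :=
    fun z hz ↦ (hP _ hz).comp_lineZ
  have hslab : EqOn (fun z ↦ P (x, y₁, z)) (fun z ↦ P (x, y₂, z)) (Ioo b h₂) :=
    fun z hz ↦ eq_of_pdy_eq_zero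
      (fun y ↦ (hP _ ⟨(hηb _).trans_lt hz.1, hz.2⟩).differentiableAt)
      (fun y ↦ hPy _ ⟨(hηb _).trans_lt hz.1, hz.2⟩) y₁ y₂
  refine AnalyticOnNhd.eqOn_Ioo_of_eqOn_Ioo
    ((hline y₁).mono (Ioo_subset_Ioo_left (le_max_left _ _)))
    ((hline y₂).mono (Ioo_subset_Ioo_left (le_max_right _ _)))
    (max_le (hηb _) (hηb _)) hbh₂ hslab ⟨max_lt hz₁.1 hz₂.1, hz₁.2⟩

/-- **Propagation of `y`-independence by real analyticity.** Let `η : ℝ² → ℝ` be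
continuous with `sup η < h₂` and let `Ω₂ = {(x,y,z) : η(x,y) < z < h₂}`. If
`P : Ω₂ → ℝ` is real analytic with `∂ᵧP ≡ 0` in `Ω₂`, then `P` is independent of `y`:
`P(x, y₁, z) = P(x, y₂, z)` whenever both points lie in `Ω₂`. -/
theorem analytic_pressure_y_independent
    (h₂ : ℝ) (η : ℝ × ℝ → ℝ) (hη : Continuous η)
    (hsup : ∃ b : ℝ, b < h₂ ∧ ∀ q : ℝ × ℝ, η q ≤ b)
    (P : ℝ × ℝ × ℝ → ℝ)
    (hP : AnalyticOnNhd ℝ P {p : ℝ × ℝ × ℝ | η (p.1, p.2.1) < p.2.2 ∧ p.2.2 < h₂})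
    (hPy : ∀ p ∈ {p : ℝ × ℝ × ℝ | η (p.1, p.2.1) < p.2.2 ∧ p.2.2 < h₂}, pdy P p = 0) :
    ∀ x y₁ y₂ z : ℝ,
      (x, y₁, z) ∈ {p : ℝ × ℝ × ℝ | η (p.1, p.2.1) < p.2.2 ∧ p.2.2 < h₂} →
      (x, y₂, z) ∈ {p : ℝ × ℝ × ℝ | η (p.1, p.2.1) < p.2.2 ∧ p.2.2 < h₂} →
      P (x, y₁, z) = P (x, y₂, z) :=
  analytic_pressure_y_independent_general h₂ η hsup P hP hPy
end
end
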